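/- arXiv:2502.05821 — 6 statements merged into one kernel-verified Lean document; each statement's English description precedes it below -/
import Mathlib

section
/- If G is a nonabelian finite ab-maximal p-group, then |G : G'| ≥ p^3 · |Z(G)|. -/
/-- A finite group `G` is *ab-maximal* if `|H : H'| < |G : G'|` for every proper
subgroup `H` of `G`, where `H'` denotes the derived (commutator) subgroup. -/
def IsAbMaximal (G : Type*) [Group G] : Prop :=
  ∀ H : Subgroup G, H ≠ ⊤ → (commutator ↥H).index < (commutator G).index

open scoped commutatorElement

section Helpers

variable {G : Type*} [Group G]

/-- The commutator subgroup of a subgroup all of whose elements commute is trivial. -/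
lemma commutator_eq_bot_of_comm (A : Subgroup G)
    (h : ∀ a ∈ A, ∀ b ∈ A, a * b = b * a) : commutator ↥A = ⊥ := by
  apply le_bot_iff.mp
  rw [commutator_def, Subgroup.commutator_le]
  intro g₁ _ g₂ _
  rw [Subgroup.mem_bot, commutatorElement_eq_one_iff_mul_comm]
  exact Subtype.ext (by push_cast [h g₁ g₁.2 g₂ g₂.2]; ring_nf)

/-- For a subgroup all of whose elements commute, the index of its commutator
subgroup (inside itself) equals its cardinality. -/
lemma index_commutator_of_comm (A : Subgroup G)
    (h : ∀ a ∈ A, ∀ b ∈ A, a * b = b * a) : (commutator ↥A).index = Nat.card A := by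
  rw [commutator_eq_bot_of_comm A h, Subgroup.index_bot]

lemma card_eq_card_mul_index {H K : Subgroup G} (hHK : H ≤ K) :
    Nat.card K = Nat.card H * (H.subgroupOf K).index := by
  have h1 := Subgroup.card_mul_index (H.subgroupOf K)
  have h2 : Nat.card (H.subgroupOf K) = Nat.card H :=
    Nat.card_congr (Subgroup.subgroupOfEquivOfLe hHK).toEquiv
  rw [← h1, h2]

lemma index_subgroupOf_pow {p : ℕ} [Finite G] (hp : p.Prime) (hpG : IsPGroup p G)
    (H K : Subgroup G) : ∃ j : ℕ, (H.subgroupOf K).index = p ^ j := by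
  haveI : Fact p.Prime := ⟨hp⟩
  obtain ⟨m, hm⟩ := (IsPGroup.iff_card).mp (hpG.to_subgroup K)
  obtain ⟨j, _, hj⟩ := (Nat.dvd_prime_pow hp).mp (hm ▸ Subgroup.index_dvd_card (H.subgroupOf K))
  exact ⟨j, hj⟩

end Helpers

/-- If `G` is a nonabelian finite ab-maximal `p`-group, then
`|G : G'| ≥ p ^ 3 * |Z(G)|`. -/
theorem index_commutator_ge_of_abMaximal (p : ℕ) (hp : p.Prime)
    (G : Type*) [Group G] [Finite G] (hpG : IsPGroup p G) (hab : IsAbMaximal G)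
    (hna : ¬ ∀ a b : G, a * b = b * a) :
    p ^ 3 * Nat.card (Subgroup.center G) ≤ (commutator G).index := by
  haveI : Fact p.Prime := ⟨hp⟩
  push_neg at hna
  obtain ⟨a, b, hab'⟩ := hna
  set Z := Subgroup.center G with hZdef
  set cZ := Nat.card Z with hcZdef
  haveI : Nonempty Z := ⟨1⟩
  have hcZpos : 0 < cZ := Nat.card_pos
  obtain ⟨n, hn⟩ := IsPGroup.iff_card.mp hpG
  obtain ⟨e, _, he⟩ := (Nat.dvd_prime_pow hp).mp (hn ▸ Subgroup.index_dvd_card (commutator G))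
  obtain ⟨z, _, hz'⟩ := (Nat.dvd_prime_pow hp).mp (hn ▸ Subgroup.card_subgroup_dvd_card Z)
  have hz : cZ = p ^ z := by rw [hcZdef, hz']
  by_cases hex : ∃ A : Subgroup G, (∀ u ∈ A, ∀ v ∈ A, u * v = v * u) ∧ p ^ 2 * cZ ≤ Nat.card A
  · -- There is a "big" abelian subgroup `A`: apply ab-maximality to it.
    obtain ⟨A, hAc, hAcard⟩ := hex
    have hAne : A ≠ ⊤ := by
      intro h
      exact hab' (hAc a (h ▸ Subgroup.mem_top a) b (h ▸ Subgroup.mem_top b))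
    have h1 : Nat.card A < (commutator G).index := by
      have h := hab A hAne
      rwa [index_commutator_of_comm A hAc] at h
    have h2 : p ^ (2 + z) < p ^ e := by
      rw [pow_add]
      calc p ^ 2 * p ^ z = p ^ 2 * cZ := by rw [hz]
        _ ≤ Nat.card A := hAcard
        _ < (commutator G).index := h1
        _ = p ^ e := he
    have h3 : 2 + z < e := (pow_lt_pow_iff_right₀ hp.one_lt).mp h2
    calc p ^ 3 * cZ = p ^ (3 + z) := by rw [pow_add, hz]
      _ ≤ p ^ e := Nat.pow_le_pow_right hp.pos (by omega)
      _ = (commutator G).index := he.symm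
  · -- No abelian subgroup of order `≥ p^2 |Z|` exists: derive a contradiction.
    exfalso
    push_neg at hex
    -- `x := a` is not central.
    set x := a with hxdef
    have hx : x ∉ Z := fun h => hab' ((Subgroup.mem_center_iff.mp h) b).symm
    set C := Subgroup.centralizer {x} with hCdef
    set A := Z ⊔ Subgroup.zpowers x with hAdef
    have hAleC : ∀ g : G, g * x = x * g → A ≤ Subgroup.centralizer {g} := by
      intro g hg
      refine sup_le (Subgroup.center_le_centralizer _) ?_
      rw [Subgroup.zpowers_le, Subgroup.mem_centralizer_singleton_iff]
      exact hg.symm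
    have hAC : A ≤ C := hAleC x rfl
    have hAcomm : ∀ u ∈ A, ∀ v ∈ A, u * v = v * u := by
      intro u hu v hv
      have h1 : u * x = x * u := Subgroup.mem_centralizer_singleton_iff.mp (hAC hu)
      have h2 : v ∈ Subgroup.centralizer {u} := hAleC u h1 hv
      exact (Subgroup.mem_centralizer_singleton_iff.mp h2).symm
    have hxA : x ∈ A := Subgroup.mem_sup_right (Subgroup.mem_zpowers x)
    have hZA : Z ≤ A := le_sup_left
    -- `|A| = p * |Z|`
    have hcardA : Nat.card A = p * cZ := by
      have h1 : Nat.card A = cZ * (Z.subgroupOf A).index := card_eq_card_mul_index hZA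
      obtain ⟨j, hj⟩ := index_subgroupOf_pow hp hpG Z A
      have hj1 : j ≠ 0 := by
        intro h0
        rw [h0, pow_zero] at hj
        have hAZ : A ≤ Z := Subgroup.subgroupOf_eq_top.mp (Subgroup.index_eq_one.mp hj)
        exact hx (hAZ hxA)
      have hub : Nat.card A < p ^ 2 * cZ := hex A hAcomm
      rw [h1, hj] at hub ⊢
      have hjlt : p ^ j < p ^ 2 := by
        have h := hub
        rw [mul_comm cZ (p ^ j)] at h
        exact lt_of_mul_lt_mul_right h (Nat.zero_le cZ)
      have : j < 2 := (pow_lt_pow_iff_right₀ hp.one_lt).mp hjlt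
      have hj2 : j = 1 := by omega
      rw [hj2, pow_one, mul_comm]
    -- The centralizer of `x` is exactly `A`.
    have hCA : C ≤ A := by
      intro y hy
      by_contra hyA
      set B := A ⊔ Subgroup.zpowers y with hBdef
      have hyx : y * x = x * y := Subgroup.mem_centralizer_singleton_iff.mp hy
      have hBle : ∀ g : G, g * x = x * g → g * y = y * g → B ≤ Subgroup.centralizer {g} := by
        intro g h1 h2
        refine sup_le (hAleC g h1) ?_
        rw [Subgroup.zpowers_le, Subgroup.mem_centralizer_singleton_iff]
        exact h2.symm
      have hB1 : B ≤ Subgroup.centralizer {x} := hBle x rfl hyx.symm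
      have hB2 : B ≤ Subgroup.centralizer {y} := hBle y hyx rfl
      have hBcomm : ∀ u ∈ B, ∀ v ∈ B, u * v = v * u := by
        intro u hu v hv
        have h1 : u * x = x * u := Subgroup.mem_centralizer_singleton_iff.mp (hB1 hu)
        have h2 : u * y = y * u := Subgroup.mem_centralizer_singleton_iff.mp (hB2 hu)
        have h3 : v ∈ Subgroup.centralizer {u} := hBle u h1 h2 hv
        exact (Subgroup.mem_centralizer_singleton_iff.mp h3).symm
      have hAB : A ≤ B := le_sup_left
      have h1 : Nat.card B = Nat.card A * (A.subgroupOf B).index := card_eq_card_mul_index hAB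
      obtain ⟨j, hj⟩ := index_subgroupOf_pow hp hpG A B
      have hj1 : j ≠ 0 := by
        intro h0
        rw [h0, pow_zero] at hj
        have hBA : B ≤ A := Subgroup.subgroupOf_eq_top.mp (Subgroup.index_eq_one.mp hj)
        exact hyA (hBA (Subgroup.mem_sup_right (Subgroup.mem_zpowers y)))
      have hge : p ^ 2 * cZ ≤ Nat.card B := by
        have hpj : p ≤ p ^ j := by
          calc p = p ^ 1 := (pow_one p).symm
            _ ≤ p ^ j := Nat.pow_le_pow_right hp.pos (by omega)
        calc p ^ 2 * cZ = p * (p * cZ) := by ring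
          _ = p * Nat.card A := by rw [hcardA]
          _ ≤ p ^ j * Nat.card A := Nat.mul_le_mul_right _ hpj
          _ = Nat.card B := by rw [h1, hj, mul_comm]
      exact absurd (hex B hBcomm) (not_lt.mpr hge)
    have hCeqA : C = A := le_antisymm hCA hAC
    -- `A` is a proper subgroup.
    have hAne : A ≠ ⊤ := by
      intro h
      apply hx
      rw [hZdef, Subgroup.mem_center_iff]
      intro g
      exact Subgroup.mem_centralizer_singleton_iff.mp (hAC (h ▸ Subgroup.mem_top g))
    -- The conjugacy class of `x` injects into the commutator subgroup, via
    -- `g ↦ ⁅x⁻¹, g⁆`; hence `C.index ≤ |G'|`.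
    have hmem : ∀ g : G, ⁅x⁻¹, g⁆ ∈ commutator G := by
      intro g
      rw [commutator_def]
      exact Subgroup.commutator_mem_commutator (Subgroup.mem_top _) (Subgroup.mem_top _)
    have hidxC : C.index ≤ Nat.card (commutator G) := by
      let f : G → ↥(commutator G) := fun g => ⟨⁅x⁻¹, g⁆, hmem g⟩
      have hresp : ∀ u v : G, QuotientGroup.leftRel C u v → f u = f v := by
        intro u v huv
        have hc : (u⁻¹ * v) * x = x * (u⁻¹ * v) :=
          Subgroup.mem_centralizer_singleton_iff.mp (QuotientGroup.leftRel_apply.mp huv)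
        set c := u⁻¹ * v with hcdef
        have hvc : v = u * c := by rw [hcdef]; group
        have hcxc : c * x * c⁻¹ = x := by rw [hc, mul_inv_cancel_right]
        apply Subtype.ext
        show ⁅x⁻¹, u⁆ = ⁅x⁻¹, v⁆
        rw [commutatorElement_def, commutatorElement_def, hvc]
        calc x⁻¹ * u * x⁻¹⁻¹ * u⁻¹ = x⁻¹ * u * (c * x * c⁻¹) * u⁻¹ := by
              rw [hcxc]; group
          _ = x⁻¹ * (u * c) * x⁻¹⁻¹ * (u * c)⁻¹ := by group
      have hinj : Function.Injective (Quotient.lift f hresp : G ⧸ C → ↥(commutator G)) := by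
        intro q1 q2
        refine Quotient.inductionOn₂ q1 q2 ?_
        intro u v h
        have h' : ⁅x⁻¹, u⁆ = ⁅x⁻¹, v⁆ := Subtype.ext_iff.mp h
        rw [commutatorElement_def, commutatorElement_def] at h'
        have h'' : u * x * u⁻¹ = v * x * v⁻¹ := by
          calc u * x * u⁻¹ = x * (x⁻¹ * u * x⁻¹⁻¹ * u⁻¹) := by group
            _ = x * (x⁻¹ * v * x⁻¹⁻¹ * v⁻¹) := by rw [h']
            _ = v * x * v⁻¹ := by group
        have hm : u⁻¹ * v ∈ C := by
          rw [hCdef, Subgroup.mem_centralizer_singleton_iff]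
          calc (u⁻¹ * v) * x = u⁻¹ * (v * x * v⁻¹) * v := by group
            _ = u⁻¹ * (u * x * u⁻¹) * v := by rw [h'']
            _ = x * (u⁻¹ * v) := by group
        exact Quotient.sound (QuotientGroup.leftRel_apply.mpr hm)
      have hle : Nat.card (G ⧸ C) ≤ Nat.card ↥(commutator G) :=
        Nat.card_le_card_of_injective _ hinj
      exact hle
    -- Final contradiction: `|G : G'| ≤ p |Z| < |G : G'|`.
    have hlow : p * cZ < (commutator G).index := by
      have h := hab A hAne
      rwa [index_commutator_of_comm A hAcomm, hcardA] at h
    have e1 : Nat.card ↥(commutator G) * (commutator G).index = Nat.card G :=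
      Subgroup.card_mul_index (commutator G)
    have e2 : Nat.card ↥C * C.index = Nat.card G := Subgroup.card_mul_index C
    haveI : Nonempty ↥(commutator G) := ⟨1⟩
    have hDpos : 0 < Nat.card ↥(commutator G) := Nat.card_pos
    have hcardC : Nat.card C = p * cZ := by rw [hCeqA]; exact hcardA
    have hup : (commutator G).index ≤ p * cZ := by
      have hmain : Nat.card ↥(commutator G) * (commutator G).index
          ≤ Nat.card ↥(commutator G) * (p * cZ) := by
        calc Nat.card ↥(commutator G) * (commutator G).index = Nat.card G := e1
          _ = Nat.card ↥C * C.index := e2.symm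
          _ = (p * cZ) * C.index := by rw [hcardC]
          _ ≤ (p * cZ) * Nat.card ↥(commutator G) := Nat.mul_le_mul_left _ hidxC
          _ = Nat.card ↥(commutator G) * (p * cZ) := by rw [mul_comm]
      exact Nat.le_of_mul_le_mul_left hmain hDpos
    exact absurd (hlow.trans_le hup) (lt_irrefl _)
end

section
/- If G is an extremal ab-maximal p-group, then G' = Z(G). -/
set_option maxHeartbeats 1000000

open scoped commutatorElement

namespace ExtremalAbMaximalProof

/-! ### Arithmetic helpers -/

lemma ppow_dominate {p n a b : ℕ} (hp : p.Prime) (ha : a ∣ p ^ n) (hb : b ∣ p ^ n)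
    (hab : a < b) : p * a ≤ b := by
  obtain ⟨i, _, rfl⟩ := (Nat.dvd_prime_pow hp).mp ha
  obtain ⟨j, _, rfl⟩ := (Nat.dvd_prime_pow hp).mp hb
  have hij : i < j := by
    by_contra h
    exact absurd (Nat.pow_le_pow_right hp.one_lt.le (Nat.le_of_not_lt h)) (Nat.not_le.mpr hab)
  calc p * p ^ i = p ^ (i + 1) := by rw [pow_succ, mul_comm]
    _ ≤ p ^ j := Nat.pow_le_pow_right hp.one_lt.le hij

section GroupHelpers

variable {G : Type*} [Group G]

lemma eq_of_le_of_card_le' [Finite G] {H K : Subgroup G} (hle : H ≤ K)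
    (hcard : Nat.card ↥K ≤ Nat.card ↥H) : H = K := by
  have h1 : (H : Set G) = (K : Set G) :=
    Set.eq_of_subset_of_ncard_le hle
      (by rwa [← Nat.card_coe_set_eq, ← Nat.card_coe_set_eq])
  exact SetLike.ext' h1

lemma card_lt_of_lt [Finite G] {H K : Subgroup G} (hle : H ≤ K) (hne : H ≠ K) :
    Nat.card ↥H < Nat.card ↥K := by
  rcases lt_or_ge (Nat.card ↥H) (Nat.card ↥K) with h | h
  · exact h
  · exact absurd (eq_of_le_of_card_le' hle h) hne

lemma comm_mul_left (a b c : G) : ⁅a * b, c⁆ = a * ⁅b, c⁆ * a⁻¹ * ⁅a, c⁆ := by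
  simp only [commutatorElement_def]; group

lemma comm_mul_right (a b c : G) : ⁅a, b * c⁆ = ⁅a, b⁆ * (b * ⁅a, c⁆ * b⁻¹) := by
  simp only [commutatorElement_def]; group

/-- The closure of a pairwise-commuting set is commutative. -/
lemma closure_comm {S : Set G} (hS : ∀ a ∈ S, ∀ b ∈ S, a * b = b * a) :
    ∀ a ∈ Subgroup.closure S, ∀ b ∈ Subgroup.closure S, a * b = b * a := by
  have h1 : Subgroup.closure S ≤ Subgroup.centralizer S := by
    rw [Subgroup.closure_le]
    intro a ha
    exact Subgroup.mem_centralizer_iff.mpr fun b hb => hS b hb a ha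
  have h2 : Subgroup.closure S ≤ Subgroup.centralizer (Subgroup.closure S : Set G) := by
    rw [Subgroup.closure_le]
    intro s hs
    exact Subgroup.mem_centralizer_iff.mpr fun c hc => (h1 hc s hs).symm
  intro a ha b hb
  exact (Subgroup.mem_centralizer_iff.mp (h2 hb) a ha)

/-- A subgroup contained in the center is normal. -/
lemma normal_of_le_center {K : Subgroup G} (h : K ≤ Subgroup.center G) : K.Normal := by
  constructor
  intro n hn g
  have hc := Subgroup.mem_center_iff.mp (h hn) g
  have : g * n * g⁻¹ = n := by rw [hc]; group
  rw [this]; exact hn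

end GroupHelpers

/-! ### The pairing lemma -/

universe u v w

lemma pair_card_le (p : ℕ) (hp : p.Prime) :
    ∀ (n : ℕ) (X : Type u) (Y : Type v) (C : Type w)
      [Group X] [Group Y] [Group C] [Finite X] [Finite Y],
      Nat.card Y ≤ n → Nat.card C = p →
      ∀ B : X → Y → C,
        (∀ x x' y, B (x * x') y = B x y * B x' y) →
        (∀ x y y', B x (y * y') = B x y * B x y') →
        (∀ x, (∀ y, B x y = 1) → x = 1) →
        Nat.card X ≤ Nat.card Y := by
  intro n
  induction n with
  | zero =>
      intro X Y C _ _ _ _ _ hY _ _ _ _ _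
      have : 0 < Nat.card Y := Nat.card_pos
      omega
  | succ n ih =>
      intro X Y C _ _ _ _ _ hY hC B h1 h2 hnd
      have hp2 : 2 ≤ p := hp.two_le
      haveI : Finite C := Nat.finite_of_card_ne_zero (by omega)
      by_cases htriv : ∀ x : X, ∀ y : Y, B x y = 1
      · have hX : Nat.card X = 1 := by
          have hone : ∀ x : X, x = 1 := fun x => hnd x (htriv x)
          letI : Unique X := ⟨⟨1⟩, hone⟩
          exact Nat.card_unique
        rw [hX]
        exact Nat.card_pos
      · push_neg at htriv
        obtain ⟨x₀, y₀, hB0⟩ := htriv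
        set φ : X →* C := MonoidHom.mk' (fun g => B g y₀) (fun a b => h1 a b y₀) with hφdef
        set ψ : Y →* C := MonoidHom.mk' (fun y => B x₀ y) (fun a b => h2 x₀ a b) with hψdef
        have hφx₀ : φ x₀ = B x₀ y₀ := rfl
        have hψy₀ : ψ y₀ = B x₀ y₀ := rfl
        have hφr : Nat.card φ.range = p := by
          have hdvd : Nat.card φ.range ∣ Nat.card C := Subgroup.card_subgroup_dvd_card _
          rw [hC] at hdvd
          rcases hp.eq_one_or_self_of_dvd _ hdvd with h | h
          · exfalso
            have hbot : φ.range = ⊥ := Subgroup.card_eq_one.mp h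
            have : φ x₀ ∈ φ.range := ⟨x₀, rfl⟩
            rw [hbot, Subgroup.mem_bot, hφx₀] at this
            exact hB0 this
          · exact h
        have hψr : Nat.card ψ.range = p := by
          have hdvd : Nat.card ψ.range ∣ Nat.card C := Subgroup.card_subgroup_dvd_card _
          rw [hC] at hdvd
          rcases hp.eq_one_or_self_of_dvd _ hdvd with h | h
          · exfalso
            have hbot : ψ.range = ⊥ := Subgroup.card_eq_one.mp h
            have : ψ y₀ ∈ ψ.range := ⟨y₀, rfl⟩
            rw [hbot, Subgroup.mem_bot, hψy₀] at this
            exact hB0 this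
          · exact h
        have hXidx : φ.ker.index = p := by rw [Subgroup.index_ker, hφr]
        have hYidx : ψ.ker.index = p := by rw [Subgroup.index_ker, hψr]
        -- `ψ y₀` generates `C`
        have hψy₀ne : ψ y₀ ≠ 1 := by rw [hψy₀]; exact hB0
        have hord : orderOf (ψ y₀) = p := by
          have hdvd : orderOf (ψ y₀) ∣ p := by
            have := orderOf_dvd_natCard (ψ y₀)
            rwa [hC] at this
          rcases hp.eq_one_or_self_of_dvd _ hdvd with h | h
          · exact absurd (orderOf_eq_one_iff.mp h) hψy₀ne
          · exact h
        have hgen : ∀ c : C, ∃ k : ℤ, (ψ y₀) ^ k = c := by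
          intro c
          have htop : Subgroup.zpowers (ψ y₀) = ⊤ := by
            apply Subgroup.eq_top_of_card_eq
            rw [Nat.card_zpowers, hord, hC]
          have : c ∈ Subgroup.zpowers (ψ y₀) := htop ▸ Subgroup.mem_top c
          exact Subgroup.mem_zpowers_iff.mp this
        -- restrict the pairing to the kernels
        have hrec : Nat.card ↥φ.ker ≤ Nat.card ↥ψ.ker := by
          have hY₀card : Nat.card ↥ψ.ker ≤ n := by
            have h1' : ψ.ker.index * Nat.card ↥ψ.ker = Nat.card Y := Subgroup.index_mul_card _
            have hpos : 0 < Nat.card ↥ψ.ker := Nat.card_pos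
            rw [hYidx] at h1'
            nlinarith
          refine ih ↥φ.ker ↥ψ.ker C hY₀card hC (fun a b => B a b) ?_ ?_ ?_
          · intro a a' b
            show B ((a : X) * (a' : X)) (b : Y) = B (a : X) (b : Y) * B (a' : X) (b : Y)
            exact h1 _ _ _
          · intro a b b'
            show B (a : X) ((b : Y) * (b' : Y)) = B (a : X) (b : Y) * B (a : X) (b' : Y)
            exact h2 _ _ _
          · intro a ha
            apply Subtype.ext
            show (a : X) = 1
            apply hnd
            intro y
            obtain ⟨k, hk⟩ := hgen (ψ y)
            have hy' : y₀ ^ (-k) * y ∈ ψ.ker := by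
              rw [MonoidHom.mem_ker, map_mul, map_zpow, ← hk, zpow_neg, inv_mul_cancel]
            have hyeq : y = y₀ ^ k * (y₀ ^ (-k) * y) := by
              rw [← mul_assoc, ← zpow_add, add_neg_cancel, zpow_zero, one_mul]
            set ψa : Y →* C := MonoidHom.mk' (fun y => B (a : X) y) (fun b b' => h2 _ b b')
              with hψa
            have h1a : ψa y₀ = 1 := a.2
            have h2a : ψa (y₀ ^ (-k) * y) = 1 := ha ⟨y₀ ^ (-k) * y, hy'⟩
            show ψa y = 1
            rw [hyeq, map_mul, map_zpow, h1a, h2a, one_zpow, one_mul]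
        have hXcard : Nat.card X = p * Nat.card ↥φ.ker := by
          have := Subgroup.index_mul_card φ.ker
          rw [hXidx] at this
          omega
        have hYcard : Nat.card Y = p * Nat.card ↥ψ.ker := by
          have := Subgroup.index_mul_card ψ.ker
          rw [hYidx] at this
          omega
        rw [hXcard, hYcard]
        exact Nat.mul_le_mul_left p hrec

/-! ### Quotients of ab-maximal groups -/

lemma abmax_quotient {G : Type u} [Group G] [Finite G] (hab : IsAbMaximal G)
    (N : Subgroup G) [N.Normal] (hN : N ≤ commutator G) : IsAbMaximal (G ⧸ N) := by
  intro Kq hKq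
  have hφs : Function.Surjective (QuotientGroup.mk' N) := QuotientGroup.mk'_surjective N
  set K := Subgroup.comap (QuotientGroup.mk' N) Kq with hKdef
  have hKtop : K ≠ ⊤ := by
    intro h
    apply hKq
    rw [← Subgroup.map_comap_eq_self_of_surjective hφs Kq, ← hKdef, h,
      Subgroup.map_top_of_surjective _ hφs]
  have hmain := hab K hKtop
  have hρ : ∃ ρ : ↥K →* ↥Kq, Function.Surjective ρ := by
    refine ⟨((QuotientGroup.mk' N).domRestrict K).codRestrict Kq (fun k => k.2), ?_⟩
    intro kq
    obtain ⟨g, hg⟩ := hφs kq.1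
    have hgK : g ∈ K := by rw [hKdef, Subgroup.mem_comap, hg]; exact kq.2
    exact ⟨⟨g, hgK⟩, Subtype.ext hg⟩
  obtain ⟨ρ, hρs⟩ := hρ
  have hcommmap : Subgroup.map ρ (commutator ↥K) = commutator ↥Kq := by
    rw [commutator_def, commutator_def, Subgroup.map_commutator,
      Subgroup.map_top_of_surjective ρ hρs]
  have hidx1 : (commutator ↥Kq).index ≤ (commutator ↥K).index := by
    rw [← hcommmap]
    have hfin : (commutator ↥K).index ≠ 0 := Subgroup.index_ne_zero_of_finite
    have hdvd := Subgroup.index_map_dvd (H := commutator ↥K) hρs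
    exact Nat.le_of_dvd (Nat.pos_of_ne_zero hfin) hdvd
  have hidx2 : (commutator (G ⧸ N)).index = (commutator G).index := by
    have hmap : Subgroup.map (QuotientGroup.mk' N) (commutator G) = commutator (G ⧸ N) := by
      rw [commutator_def, commutator_def, Subgroup.map_commutator,
        Subgroup.map_top_of_surjective _ hφs]
    rw [← hmap]
    exact Subgroup.index_map_eq (H := commutator G) (f := QuotientGroup.mk' N) hφs
      (by rw [QuotientGroup.ker_mk']; exact hN)
  rw [hidx2]
  exact lt_of_le_of_lt hidx1 hmain

/-! ### p-group facts -/

lemma inf_center_nontrivial {p : ℕ} (hp : p.Prime) (G : Type u) [Group G] [Finite G]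
    (hpG : IsPGroup p G) (M : Subgroup G) (hMn : M.Normal) (hM : M ≠ ⊥) :
    ∃ x : G, (x ∈ M ∧ x ∈ Subgroup.center G) ∧ x ≠ 1 := by
  haveI := hMn
  haveI := Fact.mk hp
  have hpC : IsPGroup p (ConjAct G) := hpG.of_equiv ConjAct.toConjAct
  -- `ConjAct G` acts on `↥M`
  have hmod := hpC.card_modEq_card_fixedPoints (α := ↥M)
  have hMcard : p ∣ Nat.card ↥M := by
    obtain ⟨n, hn⟩ := (IsPGroup.iff_card.mp (hpG.to_subgroup M))
    rcases n with _ | m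
    · exfalso
      rw [pow_zero] at hn
      exact hM (Subgroup.card_eq_one.mp hn)
    · rw [hn]
      exact dvd_pow_self p (Nat.succ_ne_zero m)
  have hfix : p ∣ Nat.card (MulAction.fixedPoints (ConjAct G) ↥M) := by
    have := (hmod.symm.trans (Nat.modEq_zero_iff_dvd.mpr hMcard))
    exact Nat.modEq_zero_iff_dvd.mp this
  have hone : (1 : ↥M) ∈ MulAction.fixedPoints (ConjAct G) ↥M := by
    intro g
    apply Subtype.ext
    rw [ConjAct.Subgroup.val_conj_smul]
    simp [ConjAct.smul_def]
  have hcard1 : 1 < Nat.card (MulAction.fixedPoints (ConjAct G) ↥M) := by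
    have hpos : 0 < Nat.card (MulAction.fixedPoints (ConjAct G) ↥M) := by
      have : Nonempty (MulAction.fixedPoints (ConjAct G) ↥M) := ⟨⟨1, hone⟩⟩
      exact Nat.card_pos
    have h2p := hp.two_le
    have := Nat.le_of_dvd hpos hfix
    omega
  rw [Finite.one_lt_card_iff_nontrivial] at hcard1
  obtain ⟨⟨a, ha⟩, hane⟩ := exists_ne (⟨⟨1, M.one_mem⟩, hone⟩ :
    MulAction.fixedPoints (ConjAct G) ↥M)
  refine ⟨(a : G), ⟨a.2, ?_⟩, ?_⟩
  · rw [Subgroup.mem_center_iff]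
    intro g
    have := ha (ConjAct.toConjAct g)
    have hval : (ConjAct.toConjAct g) • (a : G) = (a : G) := by
      have := congrArg (Subtype.val) this
      rw [ConjAct.Subgroup.val_conj_smul] at this
      exact this
    rw [ConjAct.smul_def, ConjAct.ofConjAct_toConjAct] at hval
    calc g * ↑a = g * ↑a * g⁻¹ * g := by group
      _ = ↑a * g := by rw [hval]
  · intro h
    apply hane
    apply Subtype.ext
    apply Subtype.ext
    exact h

lemma exists_subgroup_card_p {p : ℕ} (hp : p.Prime) {G : Type u} [Group G]
    (hpG : IsPGroup p G) {M : Subgroup G} (hM : M ≠ ⊥) :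
    ∃ S : Subgroup G, S ≤ M ∧ Nat.card ↥S = p := by
  obtain ⟨a, hane⟩ := Subgroup.ne_bot_iff_exists_ne_one.mp hM
  set x : G := (a : G) with hxdef
  have hxM : x ∈ M := a.2
  have hxne : x ≠ 1 := by
    intro h
    exact hane (Subtype.ext h)
  obtain ⟨k, hk⟩ := hpG x
  have hforder : orderOf x ∣ p ^ k := orderOf_dvd_of_pow_eq_one hk
  obtain ⟨m, hmk, hord⟩ := (Nat.dvd_prime_pow hp).mp hforder
  have hm1 : 1 ≤ m := by
    rcases Nat.eq_zero_or_pos m with h | h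
    · exfalso
      rw [h, pow_zero] at hord
      exact hxne (orderOf_eq_one_iff.mp hord)
    · exact h
  set z := x ^ (p ^ (m - 1)) with hzdef
  have hordz : orderOf z = p := by
    rw [hzdef, orderOf_pow' x (pow_pos hp.pos (m-1)).ne', hord]
    have hdvd : p ^ (m - 1) ∣ p ^ m := pow_dvd_pow p (Nat.sub_le m 1)
    rw [Nat.gcd_eq_right hdvd]
    have : p ^ m = p ^ (m - 1) * p := by
      rw [← pow_succ]
      congr 1
      omega
    rw [this, Nat.mul_div_cancel_left _ (pow_pos hp.pos (m-1))]
  refine ⟨Subgroup.zpowers z, Subgroup.zpowers_le.mpr ?_, ?_⟩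
  · exact M.pow_mem hxM _
  · rw [Nat.card_zpowers, hordz]

/-! ### The class-three contradiction -/

lemma class3_contradiction {p : ℕ} (hp : p.Prime) (H : Type u) [Group H] [Finite H]
    (hab : IsAbMaximal H)
    (hT : ⁅commutator H, (⊤ : Subgroup H)⁆ ≤ Subgroup.center H)
    (hTcard : Nat.card ↥(⁅commutator H, (⊤ : Subgroup H)⁆) = p) : False := by
  classical
  have hp2 : 2 ≤ p := hp.two_le
  set D : Subgroup H := commutator H with hDdef
  set T : Subgroup H := ⁅D, (⊤ : Subgroup H)⁆ with hTdef
  set C : Subgroup H := Subgroup.centralizer (D : Set H) with hCdef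
  have hTne : T ≠ ⊥ := by
    intro h
    rw [h] at hTcard
    have h1p := hp.one_lt
    have : Nat.card ↥(⊥ : Subgroup H) = 1 := Subgroup.card_bot
    omega
  -- C is a proper subgroup
  have hCtop : C ≠ ⊤ := by
    intro h
    apply hTne
    rw [hTdef, Subgroup.commutator_eq_bot_iff_le_centralizer]
    intro d hd
    rw [Subgroup.mem_centralizer_iff]
    intro g _
    have hg : g ∈ C := h ▸ Subgroup.mem_top g
    rw [hCdef, Subgroup.mem_centralizer_iff] at hg
    exact (hg d hd).symm
  have hTcentral : ∀ t : H, t ∈ T → ∀ g : H, g * t = t * g :=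
    fun t ht g => Subgroup.mem_center_iff.mp (hT ht) g
  -- Hall–Witt (three subgroups lemma): ⁅C,C⁆ is central
  have hDC : ⁅D, C⁆ = ⊥ := by
    rw [Subgroup.commutator_eq_bot_iff_le_centralizer]
    intro d hd
    rw [Subgroup.mem_centralizer_iff]
    intro c hc
    have hc' : c ∈ C := hc
    rw [hCdef, Subgroup.mem_centralizer_iff] at hc'
    exact (hc' d hd).symm
  have hCtopD : ⁅C, (⊤ : Subgroup H)⁆ ≤ D := by
    rw [hDdef, commutator_def]
    exact Subgroup.commutator_mono le_top le_rfl
  have h3a : ⁅⁅C, (⊤ : Subgroup H)⁆, C⁆ = ⊥ := by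
    apply le_bot_iff.mp
    calc ⁅⁅C, (⊤ : Subgroup H)⁆, C⁆ ≤ ⁅D, C⁆ := Subgroup.commutator_mono hCtopD le_rfl
      _ = ⊥ := hDC
  have h3b : ⁅⁅(⊤ : Subgroup H), C⁆, C⁆ = ⊥ := by
    rw [Subgroup.commutator_comm (⊤ : Subgroup H) C]
    exact h3a
  have hE : ⁅C, C⁆ ≤ Subgroup.center H := by
    have h3 := Subgroup.commutator_commutator_eq_bot_of_rotate h3a h3b
    rw [Subgroup.commutator_eq_bot_iff_le_centralizer] at h3
    rwa [Subgroup.coe_top, Subgroup.centralizer_univ] at h3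
  set W : Subgroup H := D ⊓ Subgroup.center H with hWdef
  have hECC : ⁅C, C⁆ ≤ W := by
    apply le_inf _ hE
    rw [hDdef, commutator_def]
    exact Subgroup.commutator_mono le_top le_top
  -- normality
  haveI hDnormal : D.Normal := by rw [hDdef]; infer_instance
  haveI hCnormal : C.Normal := by
    constructor
    intro c hc g
    rw [hCdef, Subgroup.mem_centralizer_iff] at hc ⊢
    intro d hd
    have hd' : g⁻¹ * d * g ∈ D := by
      have := hDnormal.conj_mem d hd g⁻¹
      simpa using this
    have hcomm := hc _ hd'
    calc d * (g * c * g⁻¹) = g * ((g⁻¹ * d * g) * c) * g⁻¹ := by group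
      _ = g * (c * (g⁻¹ * d * g)) * g⁻¹ := by rw [hcomm]
      _ = (g * c * g⁻¹) * d := by group
  -- membership of commutators in T
  have hmemT : ∀ (v : ↥D) (g : H), ⁅(v : H), g⁆ ∈ T := fun v g => by
    rw [hTdef]
    exact Subgroup.commutator_mem_commutator v.2 (Subgroup.mem_top g)
  -- the homomorphism in the second variable
  have hmulright : ∀ (v : ↥D) (g h' : H), ⁅(v : H), g * h'⁆ = ⁅(v : H), g⁆ * ⁅(v : H), h'⁆ := by
    intro v g h'
    rw [comm_mul_right]
    congr 1
    have := hTcentral _ (hmemT v h') g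
    calc g * ⁅(v : H), h'⁆ * g⁻¹ = ⁅(v : H), h'⁆ * g * g⁻¹ := by rw [this]
      _ = ⁅(v : H), h'⁆ := by group
  have hmulleft : ∀ (v w : ↥D) (g : H),
      ⁅((v * w : ↥D) : H), g⁆ = ⁅(v : H), g⁆ * ⁅(w : H), g⁆ := by
    intro v w g
    have hcoe : ((v * w : ↥D) : H) = (v : H) * (w : H) := rfl
    rw [hcoe, comm_mul_left]
    have h1 := hTcentral _ (hmemT w g) (v : H)
    have h2 := hTcentral _ (hmemT w g) ⁅(v : H), g⁆
    calc (v : H) * ⁅(w : H), g⁆ * (v : H)⁻¹ * ⁅(v : H), g⁆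
        = ⁅(w : H), g⁆ * (v : H) * (v : H)⁻¹ * ⁅(v : H), g⁆ := by rw [h1]
      _ = ⁅(w : H), g⁆ * ⁅(v : H), g⁆ := by group
      _ = ⁅(v : H), g⁆ * ⁅(w : H), g⁆ := h2.symm
  -- bundled homomorphisms φv : H →* ↥T
  set φv : ↥D → H →* ↥T := fun v => MonoidHom.mk'
    (fun g => ⟨⁅(v : H), g⁆, hmemT v g⟩)
    (fun g h' => Subtype.ext (hmulright v g h')) with hφvdef
  have hφvC : ∀ (v : ↥D), ∀ c ∈ C, φv v c = 1 := by
    intro v c hc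
    apply Subtype.ext
    show ⁅(v : H), c⁆ = 1
    rw [commutatorElement_eq_one_iff_mul_comm]
    rw [hCdef, Subgroup.mem_centralizer_iff] at hc
    exact hc _ v.2
  set Φ : ↥D → (H ⧸ C) →* ↥T := fun v => QuotientGroup.lift C (φv v) (hφvC v) with hΦdef
  have hΦmk : ∀ (v : ↥D) (g : H), Φ v (QuotientGroup.mk g) = ⟨⁅(v : H), g⁆, hmemT v g⟩ :=
    fun v g => rfl
  have hΦmul : ∀ (v w : ↥D) (q : H ⧸ C), Φ (v * w) q = Φ v q * Φ w q := by
    intro v w q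
    obtain ⟨g, rfl⟩ := QuotientGroup.mk_surjective q
    rw [hΦmk, hΦmk, hΦmk]
    apply Subtype.ext
    exact hmulleft v w g
  have hΦW : ∀ (v : ↥D), (v : H) ∈ W → ∀ q : H ⧸ C, Φ v q = 1 := by
    intro v hv q
    obtain ⟨g, rfl⟩ := QuotientGroup.mk_surjective q
    rw [hΦmk]
    apply Subtype.ext
    show ⁅(v : H), g⁆ = 1
    rw [commutatorElement_eq_one_iff_mul_comm]
    exact (Subgroup.mem_center_iff.mp hv.2 g).symm
  -- the quotient on the D side
  set WD : Subgroup ↥D := W.subgroupOf D with hWDdef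
  haveI hWDnormal : WD.Normal := by
    constructor
    intro n hn g
    rw [hWDdef, Subgroup.mem_subgroupOf] at hn ⊢
    have hcoe : ((g * n * g⁻¹ : ↥D) : H) = (g : H) * (n : H) * (g : H)⁻¹ := rfl
    have hcent := Subgroup.mem_center_iff.mp hn.2 (g : H)
    have : ((g * n * g⁻¹ : ↥D) : H) = (n : H) := by
      rw [hcoe, hcent]; group
    rw [this]
    exact hn
  set χ : (H ⧸ C) → (↥D →* ↥T) := fun q => MonoidHom.mk' (fun v => Φ v q)
    (fun v w => hΦmul v w q) with hχdef
  set B : (H ⧸ C) → (↥D ⧸ WD) → ↥T := fun q => fun y =>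
    QuotientGroup.lift WD (χ q)
      (fun v hv => hΦW v (Subgroup.mem_subgroupOf.mp hv) q) y with hBdef
  have hBmk : ∀ (q : H ⧸ C) (v : ↥D), B q (QuotientGroup.mk v) = Φ v q := fun q v => rfl
  -- apply the pairing lemma
  have hQP : Nat.card (H ⧸ C) ≤ Nat.card (↥D ⧸ WD) := by
    refine pair_card_le p hp (Nat.card (↥D ⧸ WD)) (H ⧸ C) (↥D ⧸ WD) ↥T le_rfl hTcard B
      ?_ ?_ ?_
    · intro q q' y
      obtain ⟨v, rfl⟩ := QuotientGroup.mk_surjective y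
      rw [hBmk, hBmk, hBmk]
      exact map_mul (Φ v) q q'
    · intro q y y'
      exact map_mul (QuotientGroup.lift WD (χ q) _) y y'
    · intro q hq
      obtain ⟨g, rfl⟩ := QuotientGroup.mk_surjective q
      rw [QuotientGroup.eq_one_iff]
      rw [hCdef, Subgroup.mem_centralizer_iff]
      intro d hd
      have := hq (QuotientGroup.mk (⟨d, hd⟩ : ↥D))
      rw [hBmk, hΦmk] at this
      have hval : ⁅d, g⁆ = 1 := by
        have := congrArg Subtype.val this
        exact this
      rw [commutatorElement_eq_one_iff_mul_comm] at hval
      exact hval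
  -- counting
  have hc1 : Nat.card ↥C * C.index = Nat.card H := Subgroup.card_mul_index C
  have hc2 : C.index = Nat.card (H ⧸ C) := rfl
  have hc3 : WD.index = Nat.card (↥D ⧸ WD) := rfl
  have hc4 : Nat.card ↥WD * WD.index = Nat.card ↥D := Subgroup.card_mul_index WD
  have hc5 : Nat.card ↥WD = Nat.card ↥W :=
    Nat.card_congr (Subgroup.subgroupOfEquivOfLe inf_le_left).toEquiv
  have hc6 : Nat.card ↥(commutator ↥C) = Nat.card ↥(⁅C, C⁆) := by
    have hmap : Subgroup.map C.subtype (commutator ↥C) = ⁅C, C⁆ := by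
      rw [commutator_def, Subgroup.map_commutator]
      congr 1 <;>
        · rw [← MonoidHom.range_eq_map, Subgroup.range_subtype]
    rw [← hmap]
    exact Nat.card_congr (Subgroup.equivMapOfInjective _ _ C.subtype_injective).toEquiv
  have hc7 : Nat.card ↥(⁅C, C⁆) ≤ Nat.card ↥W := Subgroup.card_le_of_le hECC
  have hc8 : (commutator ↥C).index * Nat.card ↥(commutator ↥C) = Nat.card ↥C :=
    Subgroup.index_mul_card _
  have hc9 : D.index * Nat.card ↥D = Nat.card H := Subgroup.index_mul_card D
  have habC : (commutator ↥C).index < D.index := hab C hCtop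
  -- the contradiction
  have hDpos : 0 < Nat.card ↥D := Nat.card_pos
  have hchain : Nat.card H ≤ (commutator ↥C).index * Nat.card ↥D := by
    calc Nat.card H = Nat.card ↥C * C.index := hc1.symm
      _ = ((commutator ↥C).index * Nat.card ↥(commutator ↥C)) * C.index := by rw [hc8]
      _ = (commutator ↥C).index * (Nat.card ↥(commutator ↥C) * C.index) := by ring
      _ ≤ (commutator ↥C).index * (Nat.card ↥W * Nat.card (↥D ⧸ WD)) := by
          apply Nat.mul_le_mul_left
          apply Nat.mul_le_mul
          · rw [← hc6] at hc7; exact hc7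
          · rw [hc2]; exact hQP
      _ = (commutator ↥C).index * (Nat.card ↥WD * WD.index) := by rw [hc5, hc3]
      _ = (commutator ↥C).index * Nat.card ↥D := by rw [hc4]
  have hlt : (commutator ↥C).index * Nat.card ↥D < D.index * Nat.card ↥D :=
    Nat.mul_lt_mul_of_lt_of_le habC le_rfl hDpos
  rw [hc9] at hlt
  omega

/-! ### Part I : the derived subgroup is central -/

lemma commutator_le_center {p : ℕ} (hp : p.Prime) (G : Type u) [Group G] [Finite G]
    (hpG : IsPGroup p G) (hab : IsAbMaximal G) :
    commutator G ≤ Subgroup.center G := by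
  by_contra hcon
  have hγ : ⁅commutator G, (⊤ : Subgroup G)⁆ ≠ ⊥ := by
    intro h
    rw [Subgroup.commutator_eq_bot_iff_le_centralizer] at h
    rw [Subgroup.coe_top, Subgroup.centralizer_univ] at h
    exact hcon h
  set γ : Subgroup G := ⁅commutator G, (⊤ : Subgroup G)⁆ with hγdef
  have hγle : γ ≤ commutator G := Subgroup.commutator_le_left _ _
  -- choose a maximal normal subgroup N properly contained in γ
  set s : Set (Subgroup G) := {M | M.Normal ∧ M ≤ γ ∧ M ≠ γ} with hsdef
  have hsne : (⊥ : Subgroup G) ∈ s := ⟨inferInstance, bot_le, fun h => hγ h.symm⟩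
  obtain ⟨N, hNs, hNmax⟩ := Set.Finite.exists_maximalFor id s (Set.toFinite s) ⟨⊥, hsne⟩
  haveI hNnormal : N.Normal := hNs.1
  have hpGq : IsPGroup p (G ⧸ N) := hpG.to_quotient N
  have habq : IsAbMaximal (G ⧸ N) := abmax_quotient hab N (hNs.2.1.trans hγle)
  set φ := QuotientGroup.mk' N with hφdef
  have hφs : Function.Surjective φ := QuotientGroup.mk'_surjective N
  have hmapcomm : Subgroup.map φ (commutator G) = commutator (G ⧸ N) := by
    rw [commutator_def, commutator_def, Subgroup.map_commutator, Subgroup.map_top_of_surjective φ hφs]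
  have hmapγ : Subgroup.map φ γ = ⁅commutator (G ⧸ N), (⊤ : Subgroup (G ⧸ N))⁆ := by
    rw [hγdef, Subgroup.map_commutator, hmapcomm, Subgroup.map_top_of_surjective φ hφs]
  set T : Subgroup (G ⧸ N) := ⁅commutator (G ⧸ N), (⊤ : Subgroup (G ⧸ N))⁆ with hTdef
  haveI hTnormal : T.Normal := by rw [hTdef]; infer_instance
  have hTne : T ≠ ⊥ := by
    rw [← hmapγ]
    intro h
    rw [Subgroup.map_eq_bot_iff, hφdef, QuotientGroup.ker_mk'] at h
    exact hNs.2.2 (le_antisymm hNs.2.1 h)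
  have hcomapT : Subgroup.comap φ T = γ := by
    rw [← hmapγ, Subgroup.comap_map_eq, hφdef, QuotientGroup.ker_mk', sup_eq_left.mpr hNs.2.1]
  -- T/N is a chief factor: every nontrivial normal subgroup of T equals T
  have hchief : ∀ (M' : Subgroup (G ⧸ N)), M'.Normal → M' ≤ T → M' ≠ ⊥ → M' = T := by
    intro M' hM'n hM'le hM'ne
    have h1 : Subgroup.comap φ M' ≤ γ := by
      rw [← hcomapT]; exact Subgroup.comap_mono hM'le
    have h2 : (Subgroup.comap φ M').Normal := hM'n.comap φ
    have h3 : Subgroup.comap φ M' ≠ N := by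
      intro h
      apply hM'ne
      have hmap : Subgroup.map φ (Subgroup.comap φ M') = M' :=
        Subgroup.map_comap_eq_self_of_surjective hφs M'
      rw [h] at hmap
      rw [← hmap, Subgroup.map_eq_bot_iff, hφdef, QuotientGroup.ker_mk']
    have h4 : N ≤ Subgroup.comap φ M' := by
      intro n hn
      rw [Subgroup.mem_comap]
      have hone : φ n = 1 := by
        rw [hφdef]
        show ((n : G) : G ⧸ N) = 1
        rw [QuotientGroup.eq_one_iff]
        exact hn
      rw [hone]
      exact M'.one_mem
    by_cases h6 : Subgroup.comap φ M' = γ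
    · have := congrArg (Subgroup.map φ) h6
      rw [Subgroup.map_comap_eq_self_of_surjective hφs, hmapγ] at this
      rw [this, hTdef]
    · exfalso
      have hmem : Subgroup.comap φ M' ∈ s := ⟨h2, h1, h6⟩
      have := le_antisymm h4 (hNmax hmem h4)
      exact h3 this.symm
  -- T is central
  haveI : (T ⊓ Subgroup.center (G ⧸ N)).Normal := by
    constructor
    intro n hn g
    refine ⟨hTnormal.conj_mem n hn.1 g, ?_⟩
    have : g * n * g⁻¹ = n := by
      rw [Subgroup.mem_center_iff.mp hn.2 g]; group
    rw [this]; exact hn.2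
  have hTcenter : T ≤ Subgroup.center (G ⧸ N) := by
    have hsub : T ⊓ Subgroup.center (G ⧸ N) ≠ ⊥ := by
      obtain ⟨x, hx, hxne⟩ := inf_center_nontrivial hp (G ⧸ N) hpGq T hTnormal hTne
      intro h
      have : x ∈ (⊥ : Subgroup (G ⧸ N)) := h ▸ (Subgroup.mem_inf.mpr hx)
      exact hxne (Subgroup.mem_bot.mp this)
    have := hchief (T ⊓ Subgroup.center (G ⧸ N)) inferInstance inf_le_left hsub
    rw [← this]
    exact inf_le_right
  -- T has order p
  have hTcard : Nat.card ↥T = p := by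
    obtain ⟨S, hSle, hScard⟩ := exists_subgroup_card_p hp hpGq hTne
    have hSnormal : S.Normal := normal_of_le_center (hSle.trans hTcenter)
    have hSne : S ≠ ⊥ := by
      intro h
      rw [h] at hScard
      have h1p := hp.one_lt
      have : Nat.card ↥(⊥ : Subgroup (G ⧸ N)) = 1 := Subgroup.card_bot
      omega
    have := hchief S hSnormal hSle hSne
    rw [← this, hScard]
  exact class3_contradiction hp (G ⧸ N) habq hTcenter hTcard

/-! ### Part II : the center is at most as large as the derived subgroup -/

lemma card_center_le {p : ℕ} (hp : p.Prime) (G : Type u) [Group G] [Finite G]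
    (hpG : IsPGroup p G) (hab : IsAbMaximal G) (hna : ¬ ∀ a b : G, a * b = b * a)
    (hext : (commutator G).index = p ^ 3 * Nat.card (commutator G)) :
    Nat.card (Subgroup.center G) ≤ Nat.card (commutator G) := by
  classical
  haveI := Fact.mk hp
  have hp2 : 2 ≤ p := hp.two_le
  obtain ⟨nG, hnG⟩ := IsPGroup.iff_card.mp hpG
  set e : ℕ := Nat.card (commutator G) with hedef
  have hepos : 0 < e := Nat.card_pos
  push_neg at hna
  obtain ⟨x, y₀, hxy₀⟩ := hna
  have hx : x ∉ Subgroup.center G := by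
    intro h
    exact hxy₀ ((Subgroup.mem_center_iff.mp h y₀).symm)
  -- the centralizer of x is large
  set St : Subgroup G := Subgroup.centralizer ({x} : Set G) with hStdef
  have hStcard : (commutator G).index ≤ Nat.card ↥St := by
    -- injection G ⧸ St → commutator G
    set f : G → ↥(commutator G) := fun g => ⟨x⁻¹ * (g * x * g⁻¹), by
      have hc : x⁻¹ * (g * x * g⁻¹) = ⁅x⁻¹, g⁆ := by
        simp only [commutatorElement_def]; group
      rw [hc, commutator_def]
      exact Subgroup.commutator_mem_commutator (Subgroup.mem_top _) (Subgroup.mem_top _)⟩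
      with hfdef
    have key : ∀ a b : G, f a = f b ↔ x * (a⁻¹ * b) = (a⁻¹ * b) * x := by
      intro a b
      rw [Subtype.ext_iff]
      show x⁻¹ * (a * x * a⁻¹) = x⁻¹ * (b * x * b⁻¹) ↔ _
      constructor
      · intro h
        have h' : a * x * a⁻¹ = b * x * b⁻¹ := by
          have := congrArg (fun t => x * t) h
          simpa [← mul_assoc] using this
        calc x * (a⁻¹ * b) = a⁻¹ * (a * x * a⁻¹) * b := by group
          _ = a⁻¹ * (b * x * b⁻¹) * b := by rw [h']
          _ = (a⁻¹ * b) * x := by group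
      · intro h
        have h' : a * x * a⁻¹ = b * x * b⁻¹ := by
          calc a * x * a⁻¹ = a * (x * (a⁻¹ * b)) * b⁻¹ := by group
            _ = a * ((a⁻¹ * b) * x) * b⁻¹ := by rw [h]
            _ = b * x * b⁻¹ := by group
        rw [h']
    set F : G ⧸ St → ↥(commutator G) := Quotient.lift f (by
      intro a b hab'
      have hmem : a⁻¹ * b ∈ St := QuotientGroup.leftRel_apply.mp hab'
      rw [hStdef, Subgroup.mem_centralizer_iff] at hmem
      exact (key a b).mpr (hmem x rfl)) with hFdef
    have hFinj : Function.Injective F := by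
      intro q1 q2
      induction q1 using Quotient.inductionOn with
      | h a =>
        induction q2 using Quotient.inductionOn with
        | h b =>
          intro h
          have : f a = f b := h
          apply Quotient.sound
          have hmem : a⁻¹ * b ∈ St := by
            rw [hStdef, Subgroup.mem_centralizer_iff]
            intro y hy
            rw [Set.mem_singleton_iff] at hy
            subst hy
            exact (key a b).mp this
          exact QuotientGroup.leftRel_apply.mpr hmem
    have h1 : Nat.card (G ⧸ St) ≤ e := Nat.card_le_card_of_injective F hFinj
    have h2 : St.index ≤ e := h1
    have h3 : St.index * Nat.card ↥St = Nat.card G := Subgroup.index_mul_card St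
    have h4 : (commutator G).index * e = Nat.card G := Subgroup.index_mul_card _
    nlinarith [Nat.card_pos (α := ↥St)]
  rw [hext] at hStcard
  -- the abelian subgroup Zc = <center, x>
  set Sc : Set G := (Subgroup.center G : Set G) ∪ {x} with hScdef
  have hSccomm : ∀ a ∈ Sc, ∀ b ∈ Sc, a * b = b * a := by
    intro a ha b hb
    rcases ha with ha | ha
    · exact (Subgroup.mem_center_iff.mp ha b).symm
    · rcases hb with hb | hb
      · exact Subgroup.mem_center_iff.mp hb a
      · rw [Set.mem_singleton_iff] at ha hb
        subst ha; subst hb; rfl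
  set Zc : Subgroup G := Subgroup.closure Sc with hZcdef
  have hxZc : x ∈ Zc := Subgroup.subset_closure (Or.inr rfl)
  have hcZc : Subgroup.center G ≤ Zc :=
    fun z hz => Subgroup.subset_closure (Or.inl hz)
  have hZctop : Zc ≠ ⊤ := by
    intro h
    apply hxy₀
    have hx' : x ∈ Zc := by rw [h]; exact Subgroup.mem_top x
    have hy' : y₀ ∈ Zc := by rw [h]; exact Subgroup.mem_top y₀
    exact closure_comm hSccomm x hx' y₀ hy'
  have hZcab : commutator ↥Zc = ⊥ := by
    rw [commutator_def, Subgroup.commutator_eq_bot_iff_le_centralizer]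
    intro a _
    rw [Subgroup.mem_centralizer_iff]
    intro b _
    apply Subtype.ext
    exact closure_comm hSccomm (b : G) b.2 (a : G) a.2
  have hZccard : Nat.card ↥Zc < p ^ 3 * e := by
    have := hab Zc hZctop
    rwa [hZcab, Subgroup.index_bot, hext] at this
  -- choose y in the centralizer of x, outside Zc
  have hcard_lt : Nat.card ↥Zc < Nat.card ↥St := by
    calc Nat.card ↥Zc < p ^ 3 * e := hZccard
      _ ≤ Nat.card ↥St := hStcard
  have hnotle : ¬ St ≤ Zc := by
    intro h
    exact absurd (Subgroup.card_le_of_le h) (Nat.not_le.mpr hcard_lt)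
  obtain ⟨y, hySt, hyZc⟩ := SetLike.not_le_iff_exists.mp hnotle
  have hxycomm : x * y = y * x := by
    rw [hStdef, Subgroup.mem_centralizer_iff] at hySt
    exact hySt x rfl
  -- the bigger abelian subgroup A = <center, x, y>
  set SA : Set G := (Subgroup.center G : Set G) ∪ {x, y} with hSAdef
  have hSAcomm : ∀ a ∈ SA, ∀ b ∈ SA, a * b = b * a := by
    intro a ha b hb
    rcases ha with ha | ha
    · exact (Subgroup.mem_center_iff.mp ha b).symm
    · rcases hb with hb | hb
      · exact Subgroup.mem_center_iff.mp hb a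
      · rcases ha with ha | ha <;> rcases hb with hb | hb <;>
          change _ = _ at ha hb <;> subst ha <;> subst hb
        · rfl
        · exact hxycomm
        · exact hxycomm.symm
        · rfl
  set A : Subgroup G := Subgroup.closure SA with hAdef
  have hZcA : Zc ≤ A := Subgroup.closure_mono (by
    rw [hScdef, hSAdef]
    apply Set.union_subset_union_right
    intro t ht
    rw [Set.mem_singleton_iff] at ht
    exact Or.inl ht)
  have hyA : y ∈ A := Subgroup.subset_closure (Or.inr (Or.inr rfl))
  have hAtop : A ≠ ⊤ := by
    intro h
    apply hxy₀
    have hx' : x ∈ A := by rw [h]; exact Subgroup.mem_top x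
    have hy' : y₀ ∈ A := by rw [h]; exact Subgroup.mem_top y₀
    exact closure_comm hSAcomm x hx' y₀ hy'
  have hAab : commutator ↥A = ⊥ := by
    rw [commutator_def, Subgroup.commutator_eq_bot_iff_le_centralizer]
    intro a _
    rw [Subgroup.mem_centralizer_iff]
    intro b _
    apply Subtype.ext
    exact closure_comm hSAcomm (b : G) b.2 (a : G) a.2
  have hAcard : Nat.card ↥A < p ^ 3 * e := by
    have := hab A hAtop
    rwa [hAab, Subgroup.index_bot, hext] at this
  -- p-power dominance arguments
  have hdvdA : Nat.card ↥A ∣ p ^ nG := by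
    rw [← hnG]; exact Subgroup.card_subgroup_dvd_card A
  have hdvdZc : Nat.card ↥Zc ∣ p ^ nG := by
    rw [← hnG]; exact Subgroup.card_subgroup_dvd_card Zc
  have hdvdC : Nat.card (Subgroup.center G) ∣ p ^ nG := by
    rw [← hnG]; exact Subgroup.card_subgroup_dvd_card _
  have hdvdIdx : p ^ 3 * e ∣ p ^ nG := by
    rw [← hext, ← hnG]
    exact Subgroup.index_dvd_card _
  -- |A| ≤ p^2 e
  have hA2 : p * Nat.card ↥A ≤ p ^ 3 * e := ppow_dominate hp hdvdA hdvdIdx hAcard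
  -- p |Zc| ≤ |A|
  have hZcne : Zc ≠ A := fun h => hyZc (h ▸ hyA)
  have hZcltA : Nat.card ↥Zc < Nat.card ↥A := card_lt_of_lt hZcA hZcne
  have hZc2 : p * Nat.card ↥Zc ≤ Nat.card ↥A := ppow_dominate hp hdvdZc hdvdA hZcltA
  -- p |Z| ≤ |Zc|
  have hcne : Subgroup.center G ≠ Zc := by
    intro h
    exact hx (h ▸ hxZc)
  have hcltZc : Nat.card (Subgroup.center G) < Nat.card ↥Zc := card_lt_of_lt hcZc hcne
  have hc2 : p * Nat.card (Subgroup.center G) ≤ Nat.card ↥Zc :=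
    ppow_dominate hp hdvdC hdvdZc hcltZc
  -- combine : p^3 |Z| ≤ p |A| ≤ p^3 e
  have : p ^ 3 * Nat.card (Subgroup.center G) ≤ p ^ 3 * e := by
    calc p ^ 3 * Nat.card (Subgroup.center G)
        = p * (p * (p * Nat.card (Subgroup.center G))) := by ring
      _ ≤ p * (p * Nat.card ↥Zc) := by
          apply Nat.mul_le_mul_left
          apply Nat.mul_le_mul_left
          exact hc2
      _ ≤ p * Nat.card ↥A := by
          apply Nat.mul_le_mul_left
          exact hZc2
      _ ≤ p ^ 3 * e := hA2
  have hppos : 0 < p ^ 3 := by positivity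
  exact Nat.le_of_mul_le_mul_left this hppos

end ExtremalAbMaximalProof

/-- If `G` is an extremal ab-maximal `p`-group (a nonabelian ab-maximal finite
`p`-group with `|G : G'| = p ^ 3 * |G'|`), then `G' = Z(G)`. -/
theorem commutator_eq_center_of_extremal_abMaximal (p : ℕ) (hp : p.Prime)
    (G : Type*) [Group G] [Finite G] (hpG : IsPGroup p G) (hab : IsAbMaximal G)
    (hna : ¬ ∀ a b : G, a * b = b * a)
    (hext : (commutator G).index = p ^ 3 * Nat.card (commutator G)) :
    commutator G = Subgroup.center G := by
  have h1 := ExtremalAbMaximalProof.commutator_le_center hp G hpG hab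
  have h2 := ExtremalAbMaximalProof.card_center_le hp G hpG hab hna hext
  exact ExtremalAbMaximalProof.eq_of_le_of_card_le' h1 h2
end

section
/- Let p be a prime, V = F_p^n, and let H_1, …, H_k be pairwise distinct 3-dimensional subspaces of V. Then dim(H_1 ∧ H_1 + ⋯ + H_k ∧ H_k) ≥ dim(H_1 + ⋯ + H_k), where the left-hand sum of subspaces is taken inside the exterior square ⋀² V. -/
/-- For a subspace `H ≤ V`, `wedgeSq H` is the subspace `H ∧ H` of the exterior
square `⋀² V` (viewed inside the exterior algebra of `V`), namely the span of
`{x ∧ y : x, y ∈ H}`. -/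
noncomputable def wedgeSq {R M : Type*} [CommRing R] [AddCommGroup M] [Module R M]
    (H : Submodule R M) : Submodule R (ExteriorAlgebra R M) :=
  Submodule.span R
    {z | ∃ x ∈ H, ∃ y ∈ H, z = ExteriorAlgebra.ι R x * ExteriorAlgebra.ι R y}


open ExteriorAlgebra Module Submodule

variable {K V : Type*} [Field K] [AddCommGroup V] [Module K V]

/-- The alternating bilinear form `(x, y) ↦ f x * g y - f y * g x`. -/
noncomputable def dualWedgeAlt (f g : V →ₗ[K] K) : V [⋀^Fin 2]→ₗ[K] K where
  toFun v := f (v 0) * g (v 1) - f (v 1) * g (v 0)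
  map_update_add' m i x y := by
    fin_cases i <;>
      simp [Function.update_apply, map_add] <;> ring
  map_update_smul' m i c x := by
    fin_cases i <;>
      simp [Function.update_apply, map_smul] <;> ring
  map_eq_zero_of_eq' v i j hij hne := by
    fin_cases i <;> fin_cases j <;> simp_all <;> rw [hij] <;> ring

/-- The linear functional on the exterior algebra induced by two dual vectors. -/
noncomputable def wedgeDual (f g : V →ₗ[K] K) : ExteriorAlgebra K V →ₗ[K] K :=
  ExteriorAlgebra.liftAlternating
    (Function.update (fun _ => 0) 2 (dualWedgeAlt f g))

theorem wedgeDual_apply (f g : V →ₗ[K] K) (x y : V) :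
    wedgeDual f g (ι K x * ι K y) = f x * g y - f y * g x := by
  have h : ι K x * ι K y = ιMulti K 2 ![x, y] := by
    simp [ιMulti_apply, List.ofFn_succ]
  rw [h, wedgeDual, liftAlternating_apply_ιMulti, Function.update_self]
  simp [dualWedgeAlt]

theorem mul_mem_wedgeSq {H : Submodule K V} {x y : V} (hx : x ∈ H) (hy : y ∈ H) :
    ι K x * ι K y ∈ wedgeSq H :=
  Submodule.subset_span ⟨x, hx, y, hy, rfl⟩

theorem wedgeSq_mono {H W : Submodule K V} (h : H ≤ W) : wedgeSq H ≤ wedgeSq W := by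
  apply Submodule.span_mono
  rintro z ⟨x, hx, y, hy, rfl⟩
  exact ⟨x, h hx, y, h hy, rfl⟩

theorem wedgeDual_eq_zero_of_mem {W : Submodule K V} {f : V →ₗ[K] K}
    (hf : ∀ w ∈ W, f w = 0) (g : V →ₗ[K] K) {z : ExteriorAlgebra K V}
    (hz : z ∈ wedgeSq W) : wedgeDual f g z = 0 := by
  have : wedgeSq W ≤ LinearMap.ker (wedgeDual f g) := by
    rw [wedgeSq, Submodule.span_le]
    rintro w ⟨x, hx, y, hy, rfl⟩
    simp [LinearMap.mem_ker, wedgeDual_apply, hf x hx, hf y hy]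
  simpa using this hz

noncomputable def mulι : V →ₗ[K] V →ₗ[K] ExteriorAlgebra K V :=
  ((LinearMap.mul K (ExteriorAlgebra K V)).comp (ι K)).compl₂ (ι K)

theorem wedgeSq_eq_map₂ (H : Submodule K V) :
    wedgeSq H = Submodule.map₂ (mulι (K := K) (V := V)) H H := by
  rw [Submodule.map₂_eq_span_image2, wedgeSq]
  congr 1
  ext z
  simp only [Set.mem_setOf_eq, Set.mem_image2]
  constructor
  · rintro ⟨x, hx, y, hy, rfl⟩; exact ⟨x, hx, y, hy, rfl⟩
  · rintro ⟨x, hx, y, hy, rfl⟩; exact ⟨x, hx, y, hy, rfl⟩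

theorem wedgeSq_fd (H : Submodule K V) [FiniteDimensional K H] :
    FiniteDimensional K (wedgeSq H) := by
  obtain ⟨S, hS⟩ := (Module.Finite.iff_fg.mp inferInstance : H.FG)
  rw [wedgeSq_eq_map₂, ← hS, Submodule.map₂_span_span]
  exact FiniteDimensional.span_of_finite K (Set.Finite.image2 _ S.finite_toSet S.finite_toSet)

theorem exists_dual_of_not_mem {p : Submodule K V} {x : V} (hx : x ∉ p) :
    ∃ f : V →ₗ[K] K, (∀ y ∈ p, f y = 0) ∧ f x = 1 := by
  have hne : p.mkQ x ≠ 0 := by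
    simpa [Submodule.mkQ_apply, Submodule.Quotient.mk_eq_zero] using hx
  obtain ⟨φ, hφ⟩ : ∃ φ : Module.Dual K (V ⧸ p), φ (p.mkQ x) ≠ 0 := by
    by_contra h
    push_neg at h
    exact hne ((Module.forall_dual_apply_eq_zero_iff K _).mp h)
  refine ⟨(φ (p.mkQ x))⁻¹ • (φ.comp p.mkQ), fun y hy => ?_, ?_⟩
  · simp [Submodule.Quotient.mk_eq_zero, (Submodule.Quotient.mk_eq_zero p).mpr hy,
      show p.mkQ y = 0 by simpa [Submodule.mkQ_apply, Submodule.Quotient.mk_eq_zero] using hy]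
  · simp only [LinearMap.smul_apply, LinearMap.comp_apply, smul_eq_mul]
    exact inv_mul_cancel₀ hφ

theorem key_lemma {ι κ : Type*} [Fintype κ] [DecidableEq ι] [DecidableEq κ]
    [FiniteDimensional K V]
    (W H0 : Submodule K V) (U : Submodule K (ExteriorAlgebra K V))
    [FiniteDimensional K U]
    (hU : U ≤ wedgeSq W)
    (v : ι → V) (hv : LinearIndependent K v)
    (hvH : ∀ i, v i ∈ H0)
    (q : κ → ι × ι)
    (hne : ∀ c, (q c).1 ≠ (q c).2)
    (hinj : Function.Injective q)
    (hswap : ∀ c c', c ≠ c' → ¬((q c').1 = (q c).2 ∧ (q c').2 = (q c).1))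
    (hfst : ∀ c, v (q c).1 ∉ W ⊔ Submodule.span K (v '' {x | x ≠ (q c).1})) :
    Module.finrank K U + Fintype.card κ ≤ Module.finrank K ↥(U ⊔ wedgeSq H0) := by
  classical
  -- dual functionals
  have hf := fun c => exists_dual_of_not_mem (hfst c)
  choose f hf0 hf1 using hf
  have hfW : ∀ c, ∀ w ∈ W, f c w = 0 := fun c w hw =>
    hf0 c w (Submodule.mem_sup_left hw)
  have hfv : ∀ c x, x ≠ (q c).1 → f c (v x) = 0 := fun c x hx =>
    hf0 c (v x) (Submodule.mem_sup_right (Submodule.subset_span ⟨x, hx, rfl⟩))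
  have hg := fun c => exists_dual_of_not_mem
    (hv.notMem_span_image (s := {x | x ≠ (q c).2}) (x := (q c).2) (by simp))
  choose g hg0 hg1 using hg
  have hgv : ∀ c x, x ≠ (q c).2 → g c (v x) = 0 := fun c x hx =>
    hg0 c (v x) (Submodule.subset_span ⟨x, hx, rfl⟩)
  set F := fun c => wedgeDual (f c) (g c) with hF
  set z : κ → ExteriorAlgebra K V :=
    fun c => ExteriorAlgebra.ι K (v (q c).1) * ExteriorAlgebra.ι K (v (q c).2) with hzdef
  have hFz : ∀ c c', F c (z c') = if c' = c then 1 else 0 := by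
    intro c c'
    rw [hF, hzdef]
    simp only [wedgeDual_apply]
    by_cases h : c' = c
    · subst h
      rw [hf1, hg1, hfv _ _ (Ne.symm (hne _)), hgv _ _ (hne _)]
      simp
    · rw [if_neg h]
      by_cases h1 : (q c').1 = (q c).1
      · have h2 : (q c').2 ≠ (q c).2 := by
          intro h2
          exact h (hinj (Prod.ext h1 h2))
        rw [hgv c _ h2]
        by_cases h3 : (q c').2 = (q c).1
        · exact absurd (h3.trans h1.symm) (hne c').symm
        · rw [hfv c _ h3]; ring
      · rw [hfv c _ h1]
        by_cases h3 : (q c').2 = (q c).1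
        · have h4 : (q c').1 ≠ (q c).2 := fun h4 =>
            hswap c c' (Ne.symm h) ⟨h4, h3⟩
          rw [hgv c _ h4]; ring
        · rw [hfv c _ h3]; ring
  have hFU : ∀ c, ∀ u ∈ U, F c u = 0 := fun c u hu =>
    wedgeDual_eq_zero_of_mem (hfW c) (g c) (hU hu)
  -- z is linearly independent
  have hz : LinearIndependent K z := by
    rw [Fintype.linearIndependent_iff]
    intro a ha c
    have := congrArg (F c) ha
    rw [map_sum, map_zero] at this
    simp only [map_smul, hFz, smul_eq_mul, mul_ite, mul_one, mul_zero] at this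
    rwa [Finset.sum_ite_eq' Finset.univ c a, if_pos (Finset.mem_univ c)] at this
  have hSfd : FiniteDimensional K (Submodule.span K (Set.range z)) :=
    FiniteDimensional.span_of_finite K (Set.finite_range z)
  have hcard : Module.finrank K (Submodule.span K (Set.range z)) = Fintype.card κ :=
    finrank_span_eq_card hz
  -- U ⊓ span z = ⊥
  have hdisj : U ⊓ Submodule.span K (Set.range z) = ⊥ := by
    rw [eq_bot_iff]
    rintro x ⟨hxU, hxS⟩
    obtain ⟨a, rfl⟩ := Submodule.mem_span_range_iff_exists_fun K |>.mp hxS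
    have hc : ∀ c, a c = 0 := by
      intro c
      have h0 := hFU c _ hxU
      rw [map_sum] at h0
      simp only [map_smul, hFz, smul_eq_mul, mul_ite, mul_one, mul_zero] at h0
      rwa [Finset.sum_ite_eq' Finset.univ c a, if_pos (Finset.mem_univ c)] at h0
    simp [hc]
  have hsum := Submodule.finrank_sup_add_finrank_inf_eq U (Submodule.span K (Set.range z))
  rw [hdisj] at hsum
  simp only [finrank_bot, add_zero] at hsum
  have hle : U ⊔ Submodule.span K (Set.range z) ≤ U ⊔ wedgeSq H0 := by
    apply sup_le_sup_left
    rw [Submodule.span_le]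
    rintro _ ⟨c, rfl⟩
    exact mul_mem_wedgeSq (hvH _) (hvH _)
  have : FiniteDimensional K (wedgeSq H0) := wedgeSq_fd H0
  have hmono := Submodule.finrank_mono (s := U ⊔ Submodule.span K (Set.range z))
    (t := U ⊔ wedgeSq H0) hle
  omega

theorem step_lemma [FiniteDimensional K V] (W H0 : Submodule K V)
    (h3 : Module.finrank K H0 = 3)
    (U : Submodule K (ExteriorAlgebra K V)) [FiniteDimensional K U]
    (hU : U ≤ wedgeSq W) :
    Module.finrank K U + 3 ≤
      Module.finrank K ↥(U ⊔ wedgeSq H0) + Module.finrank K ↥(H0 ⊓ W) := by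
  classical
  set t := Module.finrank K ↥(H0 ⊓ W) with ht
  -- the intersection, pulled back inside H0
  set K0 : Submodule K ↥H0 := (H0 ⊓ W).comap H0.subtype with hK0
  have hK0rank : Module.finrank K ↥K0 = t := by
    rw [ht]
    exact LinearEquiv.finrank_eq (Submodule.comapSubtypeEquivOfLe inf_le_left)
  obtain ⟨C, hC⟩ := Submodule.exists_isCompl K0
  set s := Module.finrank K ↥C with hs
  have hst : s + t = 3 := by
    rw [hs, ← hK0rank, ← h3]
    exact (Submodule.finrank_add_eq_of_isCompl hC.symm)
  have htle : t ≤ 3 := by omega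
  -- adapted basis of H0
  let bC : Basis (Fin s) K ↥C := Module.finBasisOfFinrankEq K ↥C rfl
  let bK : Basis (Fin t) K ↥K0 := Module.finBasisOfFinrankEq K ↥K0 hK0rank
  let e := Submodule.prodEquivOfIsCompl C K0 hC.symm
  let b : Basis (Fin s ⊕ Fin t) K ↥H0 := (bC.prod bK).map e
  set v : Fin s ⊕ Fin t → V := fun i => ((b i : ↥H0) : V) with hvdef
  have hbl : ∀ i, (b (Sum.inl i) : ↥H0) = ((bC i : ↥C) : ↥H0) := by
    intro i
    rw [Basis.map_apply]
    have h1 := Basis.prod_apply_inl_fst bC bK i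
    have h2 := Basis.prod_apply_inl_snd bC bK i
    rw [show (bC.prod bK) (Sum.inl i) = ((bC i : ↥C), (0 : ↥K0)) from Prod.ext h1 h2]
    simp [e, Submodule.coe_prodEquivOfIsCompl']
  have hbr : ∀ j, (b (Sum.inr j) : ↥H0) = ((bK j : ↥K0) : ↥H0) := by
    intro j
    rw [Basis.map_apply]
    have h1 := Basis.prod_apply_inr_fst bC bK j
    have h2 := Basis.prod_apply_inr_snd bC bK j
    rw [show (bC.prod bK) (Sum.inr j) = ((0 : ↥C), (bK j : ↥K0)) from Prod.ext h1 h2]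
    simp [e, Submodule.coe_prodEquivOfIsCompl']
  have hv : LinearIndependent K v :=
    b.linearIndependent.map' H0.subtype (Submodule.ker_subtype H0)
  have hvH : ∀ i, v i ∈ H0 := fun i => (b i).2
  have hvW : ∀ j, v (Sum.inr j) ∈ W := by
    intro j
    rw [hvdef]
    simp only [hbr]
    exact ((bK j).2 : (H0.subtype) ↑(bK j) ∈ H0 ⊓ W).2
  -- the span of the inr-part is H0 ⊓ W
  have hspan_inr : H0 ⊓ W ≤ Submodule.span K (v '' Set.range Sum.inr) := by
    have h1 : H0 ⊓ W = Submodule.map H0.subtype K0 := by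
      rw [hK0, Submodule.map_comap_subtype, ← inf_assoc, inf_idem]
    have h2 : K0 ≤ Submodule.span K (Set.range fun j => (bK j : ↥H0)) := by
      intro x hx
      have : (⟨x, hx⟩ : ↥K0) ∈ (⊤ : Submodule K ↥K0) := trivial
      rw [← bK.span_eq] at this
      have h4 := Submodule.mem_map_of_mem (f := K0.subtype) this
      rw [Submodule.map_span] at h4
      simpa [← Set.range_comp, Function.comp_def] using h4
    rw [h1]
    intro x hx
    obtain ⟨y, hy, rfl⟩ := Submodule.mem_map.mp hx
    have h5 := Submodule.mem_map_of_mem (f := H0.subtype) (h2 hy)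
    rw [Submodule.map_span] at h5
    refine Submodule.span_mono ?_ (by simpa [← Set.range_comp, Function.comp_def] using h5)
    rintro _ ⟨j, rfl⟩
    refine ⟨Sum.inr j, ⟨j, rfl⟩, ?_⟩
    rw [hvdef]
    simp only [hbr]
  -- first coordinates avoid W + span of the rest
  have hfst : ∀ i : Fin s, v (Sum.inl i) ∉
      W ⊔ Submodule.span K (v '' {x | x ≠ Sum.inl i}) := by
    intro i hmem
    rw [Submodule.mem_sup] at hmem
    obtain ⟨w, hw, y, hy, hwy⟩ := hmem
    have hyH : y ∈ H0 := by
      refine Submodule.span_le.mpr ?_ hy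
      rintro _ ⟨x, _, rfl⟩
      exact hvH x
    have hwH : w ∈ H0 ⊓ W := by
      refine ⟨?_, hw⟩
      have : w = v (Sum.inl i) - y := by rw [← hwy]; abel
      rw [this]
      exact sub_mem (hvH _) hyH
    have hwspan : w ∈ Submodule.span K (v '' {x | x ≠ Sum.inl i}) := by
      refine Submodule.span_mono ?_ (hspan_inr hwH)
      apply Set.image_mono
      rintro _ ⟨j, rfl⟩
      simp
    have : v (Sum.inl i) ∈ Submodule.span K (v '' {x | x ≠ Sum.inl i}) := by
      rw [← hwy]
      exact Submodule.add_mem _ hwspan hy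
    exact hv.notMem_span_image (x := Sum.inl i) (by simp) this
  rcases Nat.eq_zero_or_pos t with ht0 | htpos
  · -- t = 0 : all three wedge basis vectors survive
    have hs3 : s = 3 := by omega
    let P : Fin 3 → Fin 3 × Fin 3 := ![(0, 1), (0, 2), (1, 2)]
    let q : Fin 3 → (Fin s ⊕ Fin t) × (Fin s ⊕ Fin t) :=
      fun c => (Sum.inl (Fin.cast hs3.symm (P c).1), Sum.inl (Fin.cast hs3.symm (P c).2))
    have hFinj : Function.Injective
        (fun x : Fin 3 => (Sum.inl (Fin.cast hs3.symm x) : Fin s ⊕ Fin t)) := by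
      intro a b hab
      exact Fin.cast_injective _ (Sum.inl_injective hab)
    have hkey := key_lemma (κ := Fin 3) W H0 U hU v hv hvH q
      (by
        intro c h
        have h2 : (P c).1 = (P c).2 := hFinj h
        revert h2
        fin_cases c <;> decide)
      (by
        intro c c' h
        rw [Prod.ext_iff] at h
        have h1 : (P c).1 = (P c').1 := hFinj h.1
        have h2 : (P c).2 = (P c').2 := hFinj h.2
        revert h1 h2
        fin_cases c <;> fin_cases c' <;> decide)
      (by
        intro c c' hcc h
        have h1 : (P c').1 = (P c).2 := hFinj h.1
        have h2 : (P c').2 = (P c).1 := hFinj h.2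
        revert h1 h2
        fin_cases c <;> fin_cases c' <;> first
          | exact fun _ _ => hcc rfl
          | decide)
      (fun c => hfst _)
    simp only [Fintype.card_fin] at hkey
    omega
  · -- t ≥ 1 : pair each new vector with a fixed old one
    let q : Fin s → (Fin s ⊕ Fin t) × (Fin s ⊕ Fin t) :=
      fun j => (Sum.inl j, Sum.inr ⟨0, htpos⟩)
    have hkey := key_lemma (κ := Fin s) W H0 U hU v hv hvH q
      (by intro c; simp [q])
      (by
        intro c c' h
        simpa [q, Prod.ext_iff] using h)
      (by intro c c' _; simp [q])
      (fun c => hfst _)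
    simp only [Fintype.card_fin] at hkey
    omega

theorem iSup_fin_succ {α : Type*} [CompleteLattice α] {k : ℕ} (f : Fin (k + 1) → α) :
    (⨆ i, f i) = f 0 ⊔ ⨆ i : Fin k, f i.succ := by
  apply le_antisymm
  · apply iSup_le
    intro i
    rcases Fin.eq_zero_or_eq_succ i with rfl | ⟨j, rfl⟩
    · exact le_sup_left
    · exact le_sup_of_le_right (le_iSup (fun j => f j.succ) j)
  · exact sup_le (le_iSup f 0) (iSup_le fun j => le_iSup f j.succ)

theorem main_aux [FiniteDimensional K V] (k : ℕ) (H : Fin k → Submodule K V)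
    (hdim : ∀ i, Module.finrank K (H i) = 3) :
    Module.finrank K ↥(⨆ i, H i) ≤ Module.finrank K ↥(⨆ i, wedgeSq (H i)) := by
  induction k with
  | zero =>
    have e1 : (⨆ i : Fin 0, H i) = ⊥ := iSup_of_empty _
    have e2 : (⨆ i : Fin 0, wedgeSq (H i)) = ⊥ := iSup_of_empty _
    rw [e1, e2]
    simp [finrank_bot]
  | succ k ih =>
    set W' : Submodule K V := ⨆ i : Fin k, H i.succ with hW'
    set U' : Submodule K (ExteriorAlgebra K V) := ⨆ i : Fin k, wedgeSq (H i.succ) with hU'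
    haveI : ∀ i : Fin k, FiniteDimensional K (wedgeSq (H i.succ)) :=
      fun i => wedgeSq_fd (H i.succ)
    haveI : FiniteDimensional K U' := Submodule.finiteDimensional_iSup _
    have hle : U' ≤ wedgeSq W' :=
      iSup_le fun i => wedgeSq_mono (le_iSup (fun j : Fin k => H j.succ) i)
    have hstep := step_lemma W' (H 0) (hdim 0) U' hle
    have hsub := Submodule.finrank_sup_add_finrank_inf_eq (H 0) W'
    have hih : Module.finrank K ↥W' ≤ Module.finrank K ↥U' :=
      ih (fun i => H i.succ) (fun i => hdim i.succ)
    have h1 : (⨆ i, H i) = H 0 ⊔ W' := iSup_fin_succ H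
    have h2 : (⨆ i : Fin (k + 1), wedgeSq (H i)) = wedgeSq (H 0) ⊔ U' :=
      iSup_fin_succ fun i => wedgeSq (H i)
    rw [h1, h2]
    rw [hdim 0] at hsub
    rw [sup_comm U' (wedgeSq (H 0))] at hstep
    omega

/-- Let `p` be a prime, `V = F_p^n`, and let `H_1, …, H_k` be pairwise distinct
`3`-dimensional subspaces of `V`. Then
`dim (H_1 ∧ H_1 + ⋯ + H_k ∧ H_k) ≥ dim (H_1 + ⋯ + H_k)`. -/
theorem finrank_iSup_wedgeSq_ge (p : ℕ) (hp : p.Prime) (n k : ℕ)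
    (H : Fin k → Submodule (ZMod p) (Fin n → ZMod p))
    (hdim : ∀ i, Module.finrank (ZMod p) (H i) = 3)
    (hdist : Function.Injective H) :
    Module.finrank (ZMod p) ↥(⨆ i, H i) ≤
      Module.finrank (ZMod p) ↥(⨆ i, wedgeSq (H i)) := by
  haveI : Fact p.Prime := ⟨hp⟩
  exact main_aux k H hdim
end

section
/- Let p be a prime and n ≥ 5, V = F_p^n, W = F_p^{n−3}. Then the sum, over all alternating bilinear maps B : V × V → W, of the number of bad subspaces for B of dimension at least 4, is at most 16 (n−4) p^{4−n} times the total number of alternating bilinear maps B : V × V → W. In particular, the expected number of bad subspaces of dimension at least 4 for a uniformly random alternating bilinear map tends to 0 as either n → ∞ or p → ∞. -/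
open Filter

/-- The type of alternating bilinear maps `B : F_p^n × F_p^n → F_p^{n-3}`,
i.e. bilinear maps satisfying `B (v, v) = 0` for all `v`. -/
def AltMap (p n : ℕ) :=
  {B : (Fin n → ZMod p) →ₗ[ZMod p] (Fin n → ZMod p) →ₗ[ZMod p] (Fin (n - 3) → ZMod p) //
    ∀ v, B v v = 0}

/-- `B(H, H)`: the linear span in `W` of `{B (x, y) : x, y ∈ H}`. -/
def pairSpan {p n : ℕ} (B : AltMap p n) (H : Submodule (ZMod p) (Fin n → ZMod p)) :
    Submodule (ZMod p) (Fin (n - 3) → ZMod p) :=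
  Submodule.span (ZMod p) {w | ∃ x ∈ H, ∃ y ∈ H, B.1 x y = w}

/-- A proper subspace `H < V` is *bad* for `B` if
`dim W - dim B(H, H) ≥ dim V - dim H`. -/
def IsBad {p n : ℕ} (B : AltMap p n) (H : Submodule (ZMod p) (Fin n → ZMod p)) : Prop :=
  H ≠ ⊤ ∧
    Module.finrank (ZMod p) (Fin (n - 3) → ZMod p)
        - Module.finrank (ZMod p) ↥(pairSpan B H) ≥
      Module.finrank (ZMod p) (Fin n → ZMod p) - Module.finrank (ZMod p) ↥H

/-- The expected number, for a uniformly random alternating bilinear map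
`B : F_p^n × F_p^n → F_p^{n-3}`, of bad subspaces for `B` of dimension at least `4`:
the total number of pairs `(B, H)` with `H` bad for `B` of dimension `≥ 4`, divided
by the total number of alternating bilinear maps. -/
noncomputable def expectedBadCount (p n : ℕ) : ℝ :=
  (Nat.card {x : AltMap p n × Submodule (ZMod p) (Fin n → ZMod p) //
      IsBad x.1 x.2 ∧ 4 ≤ Module.finrank (ZMod p) ↥x.2} : ℝ) / Nat.card (AltMap p n)

open Module Finset

/-!
Fix `H ≤ V` of dimension `d` with `4 ≤ d < n`. If `H` is bad for `B` then `dim B(H, H) ≤ d - 3`,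
so `B(H, H)` lies in some `(d - 3)`-dimensional `U ≤ W`. In a basis `e` of `V` whose first `d`
vectors lie in `H`, an alternating map is a free choice of the values `B(e i, e j)`, `i < j`, and
`B(H, H) ≤ U` forces the `C(d, 2)` values with `j < d` into `U`. Hence at most a fraction
`#Gr(d - 3, W) * p ^ (-(n - d) C(d, 2))` of all `B` make `H` bad. As `∏ (1 - p⁻ʲ) ≥ 1/4`, the
Grassmannian `Gr(k, F_p^m)` has at most `4 p ^ (k (m - k))` points, so the pairs `(B, H)` with
`dim H = d` number at most `16 p ^ (-(n - d)(d - 2)(d - 3)/2) ≤ 16 p ^ (4 - n)` times the number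
of maps, for each of the `n - 4` values of `d`.
-/

namespace LinearMap

variable {R M N ι : Type*} [CommRing R] [AddCommGroup M] [Module R M] [AddCommGroup N]
  [Module R N] [LinearOrder ι]

theorem IsAlt.ext_basis {B B' : M →ₗ[R] M →ₗ[R] N} (hB : B.IsAlt) (hB' : B'.IsAlt)
    (b : Basis ι R M) (h : ∀ i j, i < j → B (b i) (b j) = B' (b i) (b j)) : B = B' := by
  refine b.ext fun i => b.ext fun j => ?_
  rcases lt_trichotomy i j with hij | rfl | hij
  · exact h i j hij
  · rw [hB, hB']
  · rw [← hB.neg, ← hB'.neg, h j i hij]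

variable [Fintype ι]

noncomputable def altOfPairs (b : Basis ι R M) (f : {q : ι × ι // q.1 < q.2} → N) :
    M →ₗ[R] M →ₗ[R] N :=
  mk₂ R
    (fun x y => ∑ q : {q : ι × ι // q.1 < q.2},
      (b.repr x q.1.1 * b.repr y q.1.2 - b.repr x q.1.2 * b.repr y q.1.1) • f q)
    (fun _ _ _ => by
      simp only [map_add, Finsupp.add_apply, ← sum_add_distrib, ← add_smul]; congr! 2; ring)
    (fun _ _ _ => by
      simp only [map_smul, Finsupp.smul_apply, smul_eq_mul, smul_sum, smul_smul]; congr! 2; ring)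
    (fun _ _ _ => by
      simp only [map_add, Finsupp.add_apply, ← sum_add_distrib, ← add_smul]; congr! 2; ring)
    (fun _ _ _ => by
      simp only [map_smul, Finsupp.smul_apply, smul_eq_mul, smul_sum, smul_smul]; congr! 2; ring)

theorem isAlt_altOfPairs (b : Basis ι R M) (f : {q : ι × ι // q.1 < q.2} → N) :
    (altOfPairs b f).IsAlt :=
  fun _ => sum_eq_zero fun _ _ => by simp [mul_comm]

theorem altOfPairs_apply_basis (b : Basis ι R M) (f : {q : ι × ι // q.1 < q.2} → N) {i j : ι}
    (hij : i < j) : altOfPairs b f (b i) (b j) = f ⟨(i, j), hij⟩ := by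
  classical
  have coeff (q : {q : ι × ι // q.1 < q.2}) :
      Finsupp.single i (1 : R) q.1.1 * Finsupp.single j (1 : R) q.1.2 -
          Finsupp.single i (1 : R) q.1.2 * Finsupp.single j (1 : R) q.1.1 =
        if ⟨(i, j), hij⟩ = q then 1 else 0 := by
    obtain ⟨⟨a, c⟩, hac⟩ := q
    simp only [Finsupp.single_apply, Subtype.ext_iff, Prod.ext_iff]
    split_ifs <;> grind
  simp [altOfPairs, coeff]

noncomputable def altEquivOfBasis (b : Basis ι R M) :
    {B : M →ₗ[R] M →ₗ[R] N // B.IsAlt} ≃ ({q : ι × ι // q.1 < q.2} → N) where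
  toFun B q := B.1 (b q.1.1) (b q.1.2)
  invFun f := ⟨altOfPairs b f, isAlt_altOfPairs b f⟩
  left_inv B := Subtype.ext <| (isAlt_altOfPairs b _).ext_basis B.2 b
    fun _ _ hij => altOfPairs_apply_basis b _ hij
  right_inv f := funext fun q => altOfPairs_apply_basis b f q.2

theorem card_isAlt_apply_basis_mem (b : Basis ι R M) (C : {q : ι × ι // q.1 < q.2} → Set N) :
    Nat.card {B : {B : M →ₗ[R] M →ₗ[R] N // B.IsAlt} //
        ∀ q, B.1 (b q.1.1) (b q.1.2) ∈ C q} = ∏ q, Nat.card (C q) := by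
  rw [← Nat.card_pi]
  exact Nat.card_congr
    (((altEquivOfBasis b).subtypeEquiv fun _ => Iff.rfl).trans Equiv.subtypePiEquivPi)

theorem card_isAlt (b : Basis ι R M) :
    Nat.card {B : M →ₗ[R] M →ₗ[R] N // B.IsAlt} =
      Nat.card N ^ Fintype.card {q : ι × ι // q.1 < q.2} := by
  rw [Nat.card_congr (altEquivOfBasis b), Nat.card_fun,
    Nat.card_eq_fintype_card (α := {q : ι × ι // q.1 < q.2})]

end LinearMap

theorem card_pairs_fin (n : ℕ) : Fintype.card {q : Fin n × Fin n // q.1 < q.2} = n.choose 2 := by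
  let e : {q : Fin n × Fin n // q.1 < q.2} ≃ Σ j : Fin n, Fin j :=
    { toFun := fun q => ⟨q.1.2, q.1.1, q.2⟩
      invFun := fun x => ⟨(⟨x.2, x.2.2.trans x.1.2⟩, x.1), x.2.2⟩
      left_inv := fun _ => rfl
      right_inv := fun _ => rfl }
  rw [Fintype.card_congr e, Fintype.card_sigma]
  simp only [Fintype.card_fin]
  rw [Fin.sum_univ_eq_sum_range (fun j => j), sum_range_id, Nat.choose_two_right]

theorem card_pairs_fin_snd_lt {n d : ℕ} (hd : d ≤ n) :
    Fintype.card {q : {q : Fin n × Fin n // q.1 < q.2} // (q.1.2 : ℕ) < d} = d.choose 2 := by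
  rw [← card_pairs_fin d]
  exact Fintype.card_congr
    { toFun := fun q => ⟨(⟨q.1.1.1, (Fin.lt_def.1 q.1.2).trans q.2⟩, ⟨q.1.1.2, q.2⟩), q.1.2⟩
      invFun := fun q => ⟨⟨(Fin.castLE hd q.1.1, Fin.castLE hd q.1.2), q.2⟩, q.1.2.2⟩
      left_inv := fun _ => rfl
      right_inv := fun _ => rfl }

theorem card_altMap (p n : ℕ) : Nat.card (AltMap p n) = p ^ ((n - 3) * n.choose 2) := by
  rw [show Nat.card (AltMap p n) = _ from LinearMap.card_isAlt (Pi.basisFun (ZMod p) (Fin n)),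
    card_pairs_fin, Nat.card_fun, Nat.card_zmod, Nat.card_fin, ← pow_mul]

theorem one_quarter_le_prod_one_sub_pow {x : ℝ} (hx₀ : 0 ≤ x) (hx : x ≤ 1 / 2) (k : ℕ) :
    1 / 4 ≤ ∏ j ∈ range k, (1 - x ^ (j + 1)) := by
  have key (k : ℕ) : 1 / 4 + x ^ (k + 1) / 2 ≤ ∏ j ∈ range (k + 1), (1 - x ^ (j + 1)) := by
    induction k with
    | zero => norm_num; linarith
    | succ k ih =>
      set y := x ^ (k + 1)
      have hy₀ : 0 ≤ y := by positivity
      have hy : y ≤ x := pow_le_of_le_one hx₀ (by linarith) k.succ_ne_zero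
      rw [prod_range_succ, pow_succ' x (k + 1)]
      calc 1 / 4 + x * y / 2
          ≤ (1 / 4 + y / 2) * (1 - x * y) := by nlinarith [mul_nonneg hx₀ hy₀]
        _ ≤ _ := by gcongr; nlinarith
  rcases k with _ | k
  · norm_num
  · linarith [key k, pow_nonneg hx₀ (k + 1)]

theorem pow_mul_self_le_four_mul_prod {q : ℕ} (hq : 2 ≤ q) (k : ℕ) :
    q ^ (k * k) ≤ 4 * ∏ i : Fin k, (q ^ k - q ^ (i : ℕ)) := by
  have hq₀ : (q : ℝ) ≠ 0 := by positivity
  have factor (r s : ℕ) (h : r + s = k) :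
      ((q ^ k - q ^ r : ℕ) : ℝ) = (q : ℝ) ^ k * (1 - (q : ℝ)⁻¹ ^ s) := by
    subst h
    rw [Nat.cast_sub (Nat.pow_le_pow_right (by omega) (by omega))]
    push_cast
    rw [mul_sub, mul_one, pow_add, inv_pow, mul_inv_cancel_right₀ (pow_ne_zero _ hq₀)]
  have hprod : ((∏ i : Fin k, (q ^ k - q ^ (i : ℕ)) : ℕ) : ℝ) =
      (q : ℝ) ^ (k * k) * ∏ j ∈ range k, (1 - (q : ℝ)⁻¹ ^ (j + 1)) := by
    rw [← Equiv.prod_comp Fin.revPerm, Nat.cast_prod]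
    simp only [Fin.revPerm_apply]
    rw [prod_congr rfl fun (i : Fin k) _ => factor i.rev (i + 1) (by rw [Fin.val_rev]; omega),
      prod_mul_distrib, Fin.prod_univ_eq_prod_range (fun j => 1 - (q : ℝ)⁻¹ ^ (j + 1)),
      prod_const, card_univ, Fintype.card_fin, ← pow_mul]
  have hx : (q : ℝ)⁻¹ ≤ 1 / 2 := by
    rw [one_div]; exact inv_anti₀ two_pos (by exact_mod_cast hq)
  have := one_quarter_le_prod_one_sub_pow (by positivity) hx k
  have : (q : ℝ) ^ (k * k) ≤ 4 * ((∏ i : Fin k, (q ^ k - q ^ (i : ℕ)) : ℕ) : ℝ) := by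
    rw [hprod]; nlinarith [pow_pos (show (0 : ℝ) < q by positivity) (k * k)]
  exact_mod_cast this

section FiniteField

variable {K V : Type*} [Field K] [Fintype K] [AddCommGroup V] [Module K V] [FiniteDimensional K V]

theorem card_submodule_finrank_eq_mul_prod_le (k : ℕ) :
    Nat.card {U : Submodule K V // finrank K U = k} *
        ∏ i : Fin k, (Fintype.card K ^ k - Fintype.card K ^ (i : ℕ)) ≤
      Fintype.card K ^ (finrank K V * k) := by
  have : Finite V := Module.finite_of_finite K
  let embed : (Σ U : {U : Submodule K V // finrank K U = k},
      {s : Fin k → U.1 // LinearIndependent K s}) → {s : Fin k → V // LinearIndependent K s} :=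
    fun x => ⟨x.1.1.subtype ∘ x.2.1, x.2.2.map' _ x.1.1.ker_subtype⟩
  have span_embed x : Submodule.span K (Set.range (embed x).1) = x.1.1 := by
    refine Submodule.eq_of_le_of_finrank_eq ?_ ?_
    · rw [Submodule.span_le]; rintro _ ⟨i, rfl⟩; exact (x.2.1 i).2
    · rw [finrank_span_eq_card (embed x).2, Fintype.card_fin, x.1.2]
  have embed_injective : Function.Injective embed := by
    rintro ⟨U, s⟩ ⟨U', s'⟩ h
    obtain rfl : U = U' :=
      Subtype.ext <| by rw [← span_embed ⟨U, s⟩, ← span_embed ⟨U', s'⟩, h]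
    obtain rfl : s = s' :=
      Subtype.ext <| funext fun i => Subtype.ext (congrFun (congrArg Subtype.val h) i)
    rfl
  calc _ = Nat.card (Σ U : {U : Submodule K V // finrank K U = k},
        {s : Fin k → U.1 // LinearIndependent K s}) := by
        have := Fintype.ofFinite {U : Submodule K V // finrank K U = k}
        rw [Nat.card_sigma, sum_congr rfl fun U _ => by
            rw [card_linearIndependent U.2.ge, U.2],
          sum_const, card_univ, smul_eq_mul, Nat.card_eq_fintype_card]
    _ ≤ Nat.card {s : Fin k → V // LinearIndependent K s} :=
        Nat.card_le_card_of_injective _ embed_injective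
    _ ≤ Nat.card (Fin k → V) := Finite.card_subtype_le _
    _ = _ := by
        rw [Nat.card_fun, Module.natCard_eq_pow_finrank (K := K), Nat.card_eq_fintype_card,
          Nat.card_fin, ← pow_mul]

theorem card_submodule_finrank_eq_le {k : ℕ} (hk : k ≤ finrank K V) :
    Nat.card {U : Submodule K V // finrank K U = k} ≤
      4 * Fintype.card K ^ (k * (finrank K V - k)) := by
  have hq : 2 ≤ Fintype.card K := Fintype.one_lt_card
  refine Nat.le_of_mul_le_mul_right ?_ (pow_pos (by omega : 0 < Fintype.card K) (k * k))
  calc _ ≤ Nat.card {U : Submodule K V // finrank K U = k} *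
        (4 * ∏ i : Fin k, (Fintype.card K ^ k - Fintype.card K ^ (i : ℕ))) :=
        Nat.mul_le_mul_left _ (pow_mul_self_le_four_mul_prod hq k)
    _ ≤ 4 * Fintype.card K ^ (finrank K V * k) := by
        rw [mul_left_comm]; exact Nat.mul_le_mul_left _ (card_submodule_finrank_eq_mul_prod_le k)
    _ = _ := by
        rw [mul_assoc, ← pow_add, ← Nat.mul_add, Nat.sub_add_cancel hk, mul_comm k]

end FiniteField

theorem Submodule.exists_basis_fin_apply_mem {K V : Type*} [Field K] [AddCommGroup V]
    [Module K V] [FiniteDimensional K V] (H : Submodule K V) {n : ℕ} (hn : finrank K V = n) :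
    ∃ b : Basis (Fin n) K V, ∀ i : Fin n, (i : ℕ) < finrank K H → b i ∈ H := by
  obtain ⟨H', hH'⟩ := H.exists_isCompl
  have hdim : finrank K H + finrank K H' = n := hn ▸ Submodule.finrank_add_eq_of_isCompl hH'
  let b₀ : Basis (Fin (finrank K H) ⊕ Fin (finrank K H')) K V :=
    ((finBasis K H).prod (finBasis K H')).map (Submodule.prodEquivOfIsCompl H H' hH')
  refine ⟨b₀.reindex (finSumFinEquiv.trans (finCongr hdim)), fun i hi => ?_⟩
  have : (finSumFinEquiv.trans (finCongr hdim)).symm i = Sum.inl ⟨i, hi⟩ := by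
    rw [Equiv.symm_apply_eq]; rfl
  rw [Basis.reindex_apply, this]
  simp [b₀]

theorem Submodule.exists_le_finrank_eq {K V : Type*} [DivisionRing K] [AddCommGroup V]
    [Module K V] [FiniteDimensional K V] (N : Submodule K V) {k : ℕ} (h₁ : finrank K N ≤ k)
    (h₂ : k ≤ finrank K V) : ∃ U, N ≤ U ∧ finrank K U = k := by
  induction k, h₁ using Nat.le_induction with
  | base => exact ⟨N, le_rfl, rfl⟩
  | succ k _ ih =>
    obtain ⟨U, hNU, hU⟩ := ih (by omega)
    obtain ⟨x, -, hx⟩ := SetLike.exists_of_lt <|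
      lt_top_iff_ne_top.2 fun h : U = ⊤ => by rw [h, finrank_top] at hU; omega
    refine ⟨U ⊔ K ∙ x, hNU.trans le_sup_left, ?_⟩
    have hx₀ : x ≠ 0 := fun h => hx (h ▸ U.zero_mem)
    have h := Submodule.finrank_sup_add_finrank_inf_eq U (K ∙ x)
    rw [((Submodule.disjoint_span_singleton' hx₀).2 hx).eq_bot, finrank_bot,
      finrank_span_singleton hx₀, hU] at h
    omega

theorem Nat.card_subtype_eq_sum_card_fiberwise {α β : Type*} [Finite α] [DecidableEq β]
    {P : α → Prop} {f : α → β} {t : Finset β} (h : ∀ x, P x → f x ∈ t) :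
    Nat.card {x // P x} = ∑ b ∈ t, Nat.card {x // P x ∧ f x = b} := by
  classical
  have := Fintype.ofFinite α
  simp only [Nat.card_eq_fintype_card, Fintype.card_subtype, ← filter_filter]
  exact card_eq_sum_card_fiberwise fun x hx => h x (mem_filter.1 hx).2

/-- The left side adds up the exponents of `p` in the bounds for `#Gr(d, V)`, `#Gr(d - 3, W)`,
`#{B | B(H, H) ≤ U}` and in the factor `p ^ (n - 4)`; the right side is that of `#AltMap p n`. -/
theorem exponent_count_isBad_le {n d : ℕ} (h4 : 4 ≤ d) (hdn : d < n) :
    d * (n - d) + (d - 3) * (n - d) +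
        ((d - 3) * d.choose 2 + (n - 3) * (n.choose 2 - d.choose 2)) + (n - 4) ≤
      (n - 3) * n.choose 2 := by
  have hchoose : d.choose 2 ≤ n.choose 2 := Nat.choose_le_choose 2 hdn.le
  have htwo : d.choose 2 * 2 = d * (d - 1) := by
    rw [← sum_range_id_mul_two, sum_range_id, Nat.choose_two_right]
  zify [hchoose, h4, hdn.le, (by omega : 3 ≤ d), (by omega : 3 ≤ n), (by omega : 4 ≤ n),
    (by omega : 1 ≤ d)] at htwo ⊢
  have key : 0 ≤ ((d : ℤ) - 4) * (((n : ℤ) - d) * ((d : ℤ) - 1) - 2) :=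
    mul_nonneg (by omega) (by nlinarith)
  nlinarith

section BadSubspaces

variable {p n : ℕ}

instance AltMap.finite [NeZero p] : Finite (AltMap p n) :=
  .of_equiv _ (LinearMap.altEquivOfBasis (Pi.basisFun (ZMod p) (Fin n))).symm

variable [Fact p.Prime]

theorem card_pairSpan_le_le (H : Submodule (ZMod p) (Fin n → ZMod p))
    (U : Submodule (ZMod p) (Fin (n - 3) → ZMod p)) :
    Nat.card {B : AltMap p n // pairSpan B H ≤ U} ≤
      p ^ (finrank (ZMod p) U * (finrank (ZMod p) H).choose 2 +
        (n - 3) * (n.choose 2 - (finrank (ZMod p) H).choose 2)) := by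
  classical
  set d := finrank (ZMod p) H
  obtain ⟨b, hb⟩ := H.exists_basis_fin_apply_mem (finrank_fin_fun (ZMod p))
  let P : {q : Fin n × Fin n // q.1 < q.2} → Prop := fun q => (q.1.2 : ℕ) < d
  let C q : Set (Fin (n - 3) → ZMod p) := if P q then U else Set.univ
  have hC (B : AltMap p n) (hB : pairSpan B H ≤ U) q : B.1 (b q.1.1) (b q.1.2) ∈ C q := by
    by_cases hq : P q
    · simp only [C, if_pos hq]
      exact hB (Submodule.subset_span ⟨_, hb _ ((Fin.lt_def.1 q.2).trans hq), _, hb _ hq, rfl⟩)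
    · simp only [C, if_neg hq, Set.mem_univ]
  have hP : #{q | P q} = d.choose 2 := by
    rw [← Fintype.card_subtype,
      card_pairs_fin_snd_lt (H.finrank_le.trans_eq (finrank_fin_fun _))]
  have hnP : #{q | ¬P q} = n.choose 2 - d.choose 2 := by
    have := card_filter_add_card_filter_not (s := univ) P
    rw [card_univ, card_pairs_fin, hP] at this
    omega
  calc _ ≤ Nat.card {B : AltMap p n // ∀ q, B.1 (b q.1.1) (b q.1.2) ∈ C q} :=
        Nat.card_le_card_of_injective _ (Subtype.map_injective hC Function.injective_id)
    _ = ∏ q, Nat.card (C q) := LinearMap.card_isAlt_apply_basis_mem b C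
    _ = ∏ q, if P q then p ^ finrank (ZMod p) U else p ^ (n - 3) := by
        refine prod_congr rfl fun q _ => ?_
        dsimp only [C]
        split_ifs
        · exact (Module.natCard_eq_pow_finrank (K := ZMod p) (V := U)).trans
            (by rw [Nat.card_zmod])
        · rw [Nat.card_univ, Nat.card_fun, Nat.card_zmod, Nat.card_fin]
    _ = _ := by
        rw [prod_ite, prod_const, prod_const, hP, hnP, ← pow_mul, ← pow_mul, ← pow_add]

theorem IsBad.finrank_lt {B : AltMap p n} {H : Submodule (ZMod p) (Fin n → ZMod p)}
    (hB : IsBad B H) : finrank (ZMod p) H < n := by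
  refine (H.finrank_le.trans_eq (finrank_fin_fun _)).lt_of_ne fun h => hB.1 ?_
  exact Submodule.eq_top_of_finrank_eq (h.trans (finrank_fin_fun _).symm)

theorem IsBad.finrank_pairSpan_add_three_le {B : AltMap p n}
    {H : Submodule (ZMod p) (Fin n → ZMod p)} (hB : IsBad B H) :
    finrank (ZMod p) (pairSpan B H) + 3 ≤ finrank (ZMod p) H := by
  have h := hB.2
  have := hB.finrank_lt
  have := (pairSpan B H).finrank_le
  simp only [finrank_fin_fun] at h this
  omega

theorem card_isBad_le (H : Submodule (ZMod p) (Fin n → ZMod p)) {d : ℕ}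
    (hd : finrank (ZMod p) H = d) :
    Nat.card {B : AltMap p n // IsBad B H} ≤
      4 * p ^ ((d - 3) * (n - d)) *
        p ^ ((d - 3) * d.choose 2 + (n - 3) * (n.choose 2 - d.choose 2)) := by
  rcases isEmpty_or_nonempty {B : AltMap p n // IsBad B H} with h | ⟨⟨B₀, hB₀⟩⟩
  · simp
  have hdn := hd ▸ hB₀.finrank_lt
  have h3 := hd ▸ hB₀.finrank_pairSpan_add_three_le
  have hU (B : {B : AltMap p n // IsBad B H}) :
      ∃ U : Submodule (ZMod p) (Fin (n - 3) → ZMod p),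
        pairSpan B.1 H ≤ U ∧ finrank (ZMod p) U = d - 3 :=
    (pairSpan B.1 H).exists_le_finrank_eq
      (by have := hd ▸ B.2.finrank_pairSpan_add_three_le; omega)
      (by rw [finrank_fin_fun]; omega)
  choose U hBU hUd using hU
  have := Fintype.ofFinite
    {U : Submodule (ZMod p) (Fin (n - 3) → ZMod p) // finrank (ZMod p) U = d - 3}
  calc _ ≤ Nat.card (Σ U : {U : Submodule (ZMod p) (Fin (n - 3) → ZMod p) //
          finrank (ZMod p) U = d - 3}, {B : AltMap p n // pairSpan B H ≤ U.1}) :=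
        Nat.card_le_card_of_injective (fun B => ⟨⟨U B, hUd B⟩, B.1, hBU B⟩)
          fun _ _ h => Subtype.ext (congrArg (fun x => x.2.1) h)
    _ ≤ Nat.card {U : Submodule (ZMod p) (Fin (n - 3) → ZMod p) // finrank (ZMod p) U = d - 3} *
          p ^ ((d - 3) * d.choose 2 + (n - 3) * (n.choose 2 - d.choose 2)) := by
        rw [Nat.card_sigma, Nat.card_eq_fintype_card, ← smul_eq_mul, ← card_univ]
        exact sum_le_card_nsmul _ _ _ fun U _ =>
          (card_pairSpan_le_le H U.1).trans_eq (by rw [U.2, hd])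
    _ ≤ _ := by
        gcongr
        refine (card_submodule_finrank_eq_le (by rw [finrank_fin_fun]; omega)).trans_eq ?_
        rw [ZMod.card, finrank_fin_fun, show n - 3 - (d - 3) = n - d by omega]

theorem card_isBad_finrank_eq_mul_le {d : ℕ} (h4 : 4 ≤ d) (hdn : d < n) :
    Nat.card {x : AltMap p n × Submodule (ZMod p) (Fin n → ZMod p) //
        IsBad x.1 x.2 ∧ finrank (ZMod p) x.2 = d} * p ^ (n - 4) ≤
      16 * Nat.card (AltMap p n) := by
  let e : {x : AltMap p n × Submodule (ZMod p) (Fin n → ZMod p) //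
        IsBad x.1 x.2 ∧ finrank (ZMod p) x.2 = d} ≃
      Σ H : {H : Submodule (ZMod p) (Fin n → ZMod p) // finrank (ZMod p) H = d},
        {B : AltMap p n // IsBad B H.1} :=
    { toFun := fun x => ⟨⟨x.1.2, x.2.2⟩, x.1.1, x.2.1⟩
      invFun := fun y => ⟨(y.2.1, y.1.1), y.2.2, y.1.2⟩
      left_inv := fun _ => rfl
      right_inv := fun _ => rfl }
  have := Fintype.ofFinite {H : Submodule (ZMod p) (Fin n → ZMod p) // finrank (ZMod p) H = d}
  have hcard : Nat.card {x : AltMap p n × Submodule (ZMod p) (Fin n → ZMod p) //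
        IsBad x.1 x.2 ∧ finrank (ZMod p) x.2 = d} ≤
      4 * p ^ (d * (n - d)) * (4 * p ^ ((d - 3) * (n - d)) *
        p ^ ((d - 3) * d.choose 2 + (n - 3) * (n.choose 2 - d.choose 2))) := by
    rw [Nat.card_congr e, Nat.card_sigma]
    refine (sum_le_card_nsmul _ _ _ fun H _ => card_isBad_le H.1 H.2).trans ?_
    rw [card_univ, ← Nat.card_eq_fintype_card, smul_eq_mul]
    gcongr
    refine (card_submodule_finrank_eq_le (by rw [finrank_fin_fun]; omega)).trans_eq ?_
    rw [ZMod.card, finrank_fin_fun]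
  calc _ ≤ 4 * p ^ (d * (n - d)) * (4 * p ^ ((d - 3) * (n - d)) *
        p ^ ((d - 3) * d.choose 2 + (n - 3) * (n.choose 2 - d.choose 2))) * p ^ (n - 4) := by
        gcongr
    _ = 16 * p ^ (d * (n - d) + (d - 3) * (n - d) +
          ((d - 3) * d.choose 2 + (n - 3) * (n.choose 2 - d.choose 2)) + (n - 4)) := by
        rw [pow_add, pow_add, pow_add]; ring
    _ ≤ 16 * p ^ ((n - 3) * n.choose 2) := by
        gcongr
        · exact (Fact.out : p.Prime).one_lt.le
        · exact exponent_count_isBad_le h4 hdn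
    _ = _ := by rw [card_altMap]

theorem card_isBad_four_le_finrank_mul_le :
    Nat.card {x : AltMap p n × Submodule (ZMod p) (Fin n → ZMod p) //
        IsBad x.1 x.2 ∧ 4 ≤ finrank (ZMod p) x.2} * p ^ (n - 4) ≤
      16 * (n - 4) * Nat.card (AltMap p n) := by
  rw [Nat.card_subtype_eq_sum_card_fiberwise (f := fun x => finrank (ZMod p) x.2)
      (t := Ico 4 n) fun x hx => mem_Ico.2 ⟨hx.2, hx.1.finrank_lt⟩, sum_mul]
  calc _ ≤ ∑ d ∈ Ico 4 n, 16 * Nat.card (AltMap p n) := by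
        refine sum_le_sum fun d hd => le_trans ?_
          (card_isBad_finrank_eq_mul_le (mem_Ico.1 hd).1 (mem_Ico.1 hd).2)
        gcongr
        exact Nat.card_le_card_of_injective _
          (Subtype.map_injective (fun x hx => ⟨hx.1.1, hx.2⟩) Function.injective_id)
    _ = _ := by rw [sum_const, Nat.card_Ico, smul_eq_mul]; ring

theorem card_isBad_four_le_finrank_le (hn : 4 ≤ n) :
    (Nat.card {x : AltMap p n × Submodule (ZMod p) (Fin n → ZMod p) //
        IsBad x.1 x.2 ∧ 4 ≤ finrank (ZMod p) x.2} : ℝ) ≤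
      16 * ((n : ℝ) - 4) * (p : ℝ) ^ ((4 : ℤ) - (n : ℤ)) * Nat.card (AltMap p n) := by
  have hp : (0 : ℝ) < p := by exact_mod_cast (Fact.out : p.Prime).pos
  have hz : (p : ℝ) ^ ((4 : ℤ) - n) = ((p : ℝ) ^ (n - 4))⁻¹ := by
    rw [← zpow_natCast, ← zpow_neg, Nat.cast_sub hn, neg_sub, Nat.cast_ofNat]
  have h : ((_ * p ^ (n - 4) : ℕ) : ℝ) ≤ ((16 * (n - 4) * Nat.card (AltMap p n) : ℕ) : ℝ) :=
    Nat.cast_le.2 card_isBad_four_le_finrank_mul_le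
  push_cast [Nat.cast_sub hn] at h
  rw [hz, mul_right_comm, ← div_eq_mul_inv, le_div_iff₀ (by positivity)]
  exact h

theorem expectedBadCount_le (hn : 4 ≤ n) :
    expectedBadCount p n ≤ 16 * ((n : ℝ) - 4) * (p : ℝ) ^ ((4 : ℤ) - (n : ℤ)) := by
  have : (0 : ℝ) < Nat.card (AltMap p n) := by
    rw [card_altMap]; exact_mod_cast pow_pos (Fact.out : p.Prime).pos _
  rw [expectedBadCount, div_le_iff₀ this]
  exact card_isBad_four_le_finrank_le hn

end BadSubspaces

theorem expectedBadCount_nonneg (p n : ℕ) : 0 ≤ expectedBadCount p n := by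
  unfold expectedBadCount; positivity

theorem tendsto_expectedBadCount_atTop {q : ℕ} (hq : q.Prime) :
    Tendsto (fun m : ℕ => expectedBadCount q m) atTop (nhds 0) := by
  have := Fact.mk hq
  have hq₁ : (1 : ℝ) < q := by exact_mod_cast hq.one_lt
  have hq₀ : (0 : ℝ) < q := by positivity
  have hlim : Tendsto (fun m : ℕ => 16 * (q : ℝ) ^ 4 * ((m : ℝ) ^ 1 * (q : ℝ)⁻¹ ^ m))
      atTop (nhds 0) := by
    simpa using (tendsto_pow_const_mul_const_pow_of_lt_one 1 (by positivity)
      (inv_lt_one_of_one_lt₀ hq₁)).const_mul (16 * (q : ℝ) ^ 4)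
  refine tendsto_of_tendsto_of_tendsto_of_le_of_le' tendsto_const_nhds hlim
    (.of_forall fun m => expectedBadCount_nonneg q m) ?_
  filter_upwards [eventually_ge_atTop 4] with m hm
  refine (expectedBadCount_le hm).trans ?_
  rw [show (4 : ℤ) - m = 4 + -(m : ℤ) by ring, zpow_add₀ hq₀.ne', zpow_neg, zpow_natCast,
    ← inv_pow]
  calc 16 * ((m : ℝ) - 4) * ((q : ℝ) ^ 4 * (q : ℝ)⁻¹ ^ m)
      ≤ 16 * (m : ℝ) * ((q : ℝ) ^ 4 * (q : ℝ)⁻¹ ^ m) := by gcongr; linarith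
    _ = _ := by ring

theorem tendsto_expectedBadCount_atTop_prime {m : ℕ} (hm : 5 ≤ m) :
    Tendsto (fun q : ℕ => expectedBadCount q m) (atTop ⊓ Filter.principal {q | q.Prime})
      (nhds 0) := by
  have hlim : Tendsto (fun q : ℕ => 16 * ((m : ℝ) - 4) / q) atTop (nhds 0) :=
    tendsto_const_div_atTop_nhds_zero_nat _
  refine tendsto_of_tendsto_of_tendsto_of_le_of_le' tendsto_const_nhds
    (hlim.mono_left inf_le_left) (.of_forall fun q => expectedBadCount_nonneg q m) ?_
  filter_upwards [eventually_inf_principal.2 (.of_forall fun q hq => hq)] with q (hq : q.Prime)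
  have := Fact.mk hq
  have hm' : (5 : ℝ) ≤ m := by exact_mod_cast hm
  refine (expectedBadCount_le (by omega)).trans ?_
  rw [div_eq_mul_inv, ← zpow_neg_one]
  gcongr
  · linarith
  · exact_mod_cast hq.one_lt.le
  · omega

/-- Let `p` be a prime and `n ≥ 5`. The sum, over all alternating bilinear maps
`B : F_p^n × F_p^n → F_p^{n-3}`, of the number of bad subspaces for `B` of dimension
at least `4` (equivalently, the number of pairs `(B, H)` with `H` bad of dimension
`≥ 4`) is at most `16 (n - 4) p ^ (4 - n)` times the total number of alternating
bilinear maps.  In particular, the expected number of bad subspaces of dimension at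
least `4` for a uniformly random alternating bilinear map tends to `0` as either
`n → ∞` or `p → ∞`. -/
theorem expected_high_dim_bad_subspaces (p n : ℕ) (hp : p.Prime) (hn : 5 ≤ n) :
    ((Nat.card {x : AltMap p n × Submodule (ZMod p) (Fin n → ZMod p) //
          IsBad x.1 x.2 ∧ 4 ≤ Module.finrank (ZMod p) ↥x.2} : ℝ) ≤
        16 * ((n : ℝ) - 4) * (p : ℝ) ^ ((4 : ℤ) - (n : ℤ)) * Nat.card (AltMap p n)) ∧
      (∀ q : ℕ, q.Prime →
        Tendsto (fun m : ℕ => expectedBadCount q m) atTop (nhds 0)) ∧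
      (∀ m : ℕ, 5 ≤ m →
        Tendsto (fun q : ℕ => expectedBadCount q m)
          (atTop ⊓ Filter.principal {q | q.Prime}) (nhds 0)) := by
  have := Fact.mk hp
  exact ⟨card_isBad_four_le_finrank_le (by omega), fun _ => tendsto_expectedBadCount_atTop,
    fun _ => tendsto_expectedBadCount_atTop_prime⟩
end

section
/- Let p be an odd prime, n ≥ 2, V = F_p^n, W = F_p^{n−2}, and let F : V → W be a surjective linear map. Then there exists an alternating bilinear map B : V × V → W such that every proper subspace H < V satisfies dim W − dim(B(H, H) + F(H)) < n − dim H, where F(H) denotes the image of H under F and B(H, H) denotes the linear span in W of {B(x, y) : x, y ∈ H}. -/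
open Module Submodule

noncomputable def shiftMap (R : Type*) [CommRing R] (m : ℕ) :
    (Fin m → R) →ₗ[R] (Fin m → R) where
  toFun w j := if h : (j : ℕ) = 0 then 0 else w ⟨(j : ℕ) - 1, Nat.lt_of_le_of_lt (Nat.sub_le _ _) j.isLt⟩
  map_add' x y := by funext j; by_cases h : (j : ℕ) = 0 <;> simp [h]
  map_smul' c x := by funext j; by_cases h : (j : ℕ) = 0 <;> simp [h]

noncomputable def wZero (R : Type*) [CommRing R] (m : ℕ) : Fin m → R :=
  fun j => if (j : ℕ) = 0 then 1 else 0

lemma shift_cyclic {R : Type*} [CommRing R] {m : ℕ}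
    (U : Submodule R (Fin m → R))
    (hT : ∀ x ∈ U, shiftMap R m x ∈ U) (hw : wZero R m ∈ U) : U = ⊤ := by
  have key : ∀ k : ℕ, ∀ i : Fin m, (i : ℕ) = k → Pi.single i (1 : R) ∈ U := by
    intro k
    induction k with
    | zero =>
      intro i hi
      convert hw using 1
      funext j
      simp only [Pi.single_apply, wZero, Fin.ext_iff, hi]
    | succ k ih =>
      intro i hi
      have hk : k < m := by have := i.isLt; omega
      have h2 := hT _ (ih ⟨k, hk⟩ rfl)
      convert h2 using 1
      funext j
      simp only [shiftMap, LinearMap.coe_mk, AddHom.coe_mk, Pi.single_apply, Fin.ext_iff]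
      by_cases hj : (j : ℕ) = 0
      · rw [dif_pos hj, if_neg (by omega)]
      · rw [dif_neg hj]
        by_cases hji : (j : ℕ) = (i : ℕ)
        · rw [if_pos hji, if_pos (by omega)]
        · rw [if_neg hji, if_neg (by omega)]
  rw [eq_top_iff]
  intro w _
  have : w = ∑ i, w i • (Pi.single i (1 : R) : Fin m → R) := by
    conv_lhs => rw [← Finset.univ_sum_single w]
    congr 1
    funext i
    rw [← Pi.single_smul, smul_eq_mul, mul_one]
  rw [this]
  exact Submodule.sum_mem _ fun i _ => Submodule.smul_mem _ _ (key _ i rfl)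

/-- An auxiliary alternating bilinear map built from a linear map `F`,
two linear functionals `gl, hl`, an endomorphism `T` and a vector `w0`. -/
noncomputable def mkB {R M N : Type*} [CommRing R] [AddCommGroup M] [Module R M]
    [AddCommGroup N] [Module R N] (F : M →ₗ[R] N) (gl hl : M →ₗ[R] R)
    (T : N →ₗ[R] N) (w0 : N) : M →ₗ[R] M →ₗ[R] N :=
  LinearMap.mk₂ R
    (fun x y => gl x • F y - gl y • F x + (hl x • T (F y) - hl y • T (F x))
      + (gl x * hl y - gl y * hl x) • w0)
    (fun x x' y => by simp only [map_add]; module)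
    (fun c x y => by simp only [map_smul, smul_eq_mul]; module)
    (fun x y y' => by simp only [map_add]; module)
    (fun c x y => by simp only [map_smul, smul_eq_mul]; module)

lemma mkB_apply {R M N : Type*} [CommRing R] [AddCommGroup M] [Module R M]
    [AddCommGroup N] [Module R N] (F : M →ₗ[R] N) (gl hl : M →ₗ[R] R)
    (T : N →ₗ[R] N) (w0 : N) (x y : M) :
    mkB F gl hl T w0 x y = gl x • F y - gl y • F x
      + (hl x • T (F y) - hl y • T (F x)) + (gl x * hl y - gl y * hl x) • w0 := rfl

lemma mkB_alt {R M N : Type*} [CommRing R] [AddCommGroup M] [Module R M]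
    [AddCommGroup N] [Module R N] (F : M →ₗ[R] N) (gl hl : M →ₗ[R] R)
    (T : N →ₗ[R] N) (w0 : N) (x : M) : mkB F gl hl T w0 x x = 0 := by
  rw [mkB_apply]; module

set_option maxHeartbeats 1000000 in
set_option synthInstance.maxHeartbeats 400000 in
/-- Let `p` be an odd prime, `n ≥ 2`, `V = F_p^n`, `W = F_p^{n-2}`, and let
`F : V → W` be a surjective linear map. Then there exists an alternating bilinear
map `B : V × V → W` such that every proper subspace `H < V` satisfies
`dim W - dim (B(H, H) + F(H)) < n - dim H`. -/
theorem exists_altMap_dMaximal_condition (p n : ℕ) (hp : p.Prime) (hodd : Odd p)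
    (hn : 2 ≤ n)
    (F : (Fin n → ZMod p) →ₗ[ZMod p] (Fin (n - 2) → ZMod p))
    (hF : Function.Surjective F) :
    ∃ B : (Fin n → ZMod p) →ₗ[ZMod p] (Fin n → ZMod p) →ₗ[ZMod p]
        (Fin (n - 2) → ZMod p),
      (∀ v, B v v = 0) ∧
      ∀ H : Submodule (ZMod p) (Fin n → ZMod p), H ≠ ⊤ →
        Module.finrank (ZMod p) (Fin (n - 2) → ZMod p)
            - Module.finrank (ZMod p)
                ↥(Submodule.span (ZMod p) {w | ∃ x ∈ H, ∃ y ∈ H, B x y = w}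
                    ⊔ H.map F) <
          Module.finrank (ZMod p) (Fin n → ZMod p)
            - Module.finrank (ZMod p) ↥H := by
  haveI := Fact.mk hp
  obtain ⟨s, hs⟩ := F.exists_rightInverse_of_surjective (LinearMap.range_eq_top.2 hF)
  have hsF : ∀ w, F (s w) = w := fun w => by
    have := LinearMap.ext_iff.1 hs w
    simpa using this
  have hWrank : finrank (ZMod p) (Fin (n - 2) → ZMod p) = n - 2 := Module.finrank_fin_fun _
  have hVrank : finrank (ZMod p) (Fin n → ZMod p) = n := Module.finrank_fin_fun _
  have hker : finrank (ZMod p) (LinearMap.ker F) = 2 := by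
    have h1 := LinearMap.finrank_range_add_finrank_ker F
    rw [LinearMap.range_eq_top.2 hF, finrank_top, hWrank, hVrank] at h1
    omega
  let bK := finBasisOfFinrankEq (ZMod p) (LinearMap.ker F) hker
  have hmem : ∀ x : Fin n → ZMod p, x - s (F x) ∈ LinearMap.ker F := fun x => by
    simp [LinearMap.mem_ker, map_sub, hsF]
  let k : (Fin n → ZMod p) →ₗ[ZMod p] LinearMap.ker F :=
    LinearMap.codRestrict _ (LinearMap.id - s ∘ₗ F) (fun x => by simpa using hmem x)
  let gl : (Fin n → ZMod p) →ₗ[ZMod p] ZMod p := bK.coord 0 ∘ₗ k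
  let hl : (Fin n → ZMod p) →ₗ[ZMod p] ZMod p := bK.coord 1 ∘ₗ k
  have hFb : ∀ i : Fin 2, F ((bK i : LinearMap.ker F) : Fin n → ZMod p) = 0 :=
    fun i => (bK i).2
  have hkb : ∀ i : Fin 2, k ((bK i : LinearMap.ker F) : Fin n → ZMod p) = bK i := by
    intro i
    apply Subtype.ext
    show ((bK i : LinearMap.ker F) : Fin n → ZMod p) - s (F _) = _
    rw [hFb i, map_zero, sub_zero]
  have hcoord : ∀ i j : Fin 2,
      bK.coord j ((k ((bK i : LinearMap.ker F) : Fin n → ZMod p))) =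
        if i = j then 1 else 0 := by
    intro i j
    rw [hkb i]
    simp [Basis.coord_apply, Basis.repr_self, Finsupp.single_apply]
  have hgl : ∀ i : Fin 2, gl ((bK i : LinearMap.ker F) : Fin n → ZMod p) = if i = 0 then 1 else 0 := by
    intro i; exact hcoord i 0
  have hhl : ∀ i : Fin 2, hl ((bK i : LinearMap.ker F) : Fin n → ZMod p) = if i = 1 then 1 else 0 := by
    intro i; exact hcoord i 1
  refine ⟨mkB F gl hl (shiftMap (ZMod p) (n - 2)) (wZero (ZMod p) (n - 2)),
    mkB_alt _ _ _ _ _, ?_⟩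
  intro H hH
  set B := mkB F gl hl (shiftMap (ZMod p) (n - 2)) (wZero (ZMod p) (n - 2)) with hBdef
  set S : Submodule (ZMod p) (Fin (n - 2) → ZMod p) :=
    Submodule.span (ZMod p) {w | ∃ x ∈ H, ∃ y ∈ H, B x y = w} with hS
  set U : Submodule (ZMod p) (Fin (n - 2) → ZMod p) := H.map F with hU
  have hdlt : finrank (ZMod p) H < finrank (ZMod p) (Fin n → ZMod p) :=
    Submodule.finrank_lt hH
  have hSUle : finrank (ZMod p) ↥(S ⊔ U) ≤ finrank (ZMod p) (Fin (n - 2) → ZMod p) :=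
    Submodule.finrank_le _
  have h1 := LinearMap.finrank_range_add_finrank_ker (F.domRestrict H)
  rw [LinearMap.range_domRestrict, LinearMap.ker_domRestrict] at h1
  have e : finrank (ZMod p) ↥((LinearMap.ker F).comap H.subtype)
      = finrank (ZMod p) ↥(H ⊓ LinearMap.ker F) := by
    rw [← Submodule.map_comap_subtype]
    exact LinearEquiv.finrank_eq (H.equivSubtypeMap ((LinearMap.ker F).comap H.subtype))
  rw [← hU] at h1
  have hinf2 : finrank (ZMod p) ↥(H ⊓ LinearMap.ker F) ≤ finrank (ZMod p) (LinearMap.ker F) :=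
    Submodule.finrank_mono inf_le_right
  by_cases hKH : LinearMap.ker F ≤ H
  · -- ker F ⊆ H : show S ⊄ U
    have huH : ((bK 0 : LinearMap.ker F) : Fin n → ZMod p) ∈ H := hKH (bK 0).2
    have hvH : ((bK 1 : LinearMap.ker F) : Fin n → ZMod p) ∈ H := hKH (bK 1).2
    have hBuv : B ((bK 0 : LinearMap.ker F) : Fin n → ZMod p)
        ((bK 1 : LinearMap.ker F) : Fin n → ZMod p) = wZero (ZMod p) (n - 2) := by
      rw [hBdef, mkB_apply, hFb, hFb, hgl, hgl, hhl, hhl]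
      simp
    have hw0S : wZero (ZMod p) (n - 2) ∈ S := subset_span ⟨_, huH, _, hvH, hBuv⟩
    have hBvy : ∀ y, B ((bK 1 : LinearMap.ker F) : Fin n → ZMod p) y
        = shiftMap (ZMod p) (n - 2) (F y) - gl y • wZero (ZMod p) (n - 2) := by
      intro y
      rw [hBdef, mkB_apply, hFb, hgl, hhl]
      simp only [if_neg (by decide : ¬(1 : Fin 2) = 0), if_pos rfl, if_true, eq_self_iff_true, map_zero]
      module
    have hnotle : ¬ S ≤ U := by
      intro hle
      have hUtop : U = ⊤ := by
        apply shift_cyclic U _ (hle hw0S)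
        intro w hw
        obtain ⟨y, hy, rfl⟩ := hw
        have heq : shiftMap (ZMod p) (n - 2) (F y)
            = B ((bK 1 : LinearMap.ker F) : Fin n → ZMod p) y
              + gl y • wZero (ZMod p) (n - 2) := by
          rw [hBvy y]; abel
        rw [heq]
        exact U.add_mem (hle (subset_span ⟨_, hvH, _, hy, rfl⟩))
          (U.smul_mem _ (hle hw0S))
      apply hH
      rw [eq_top_iff]
      intro x _
      have hx : F x ∈ U := hUtop ▸ Submodule.mem_top
      obtain ⟨y, hy, hxy⟩ := hx
      have hxk : x - y ∈ LinearMap.ker F := by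
        simp [LinearMap.mem_ker, map_sub, hxy]
      have hxe : x = y + (x - y) := by ring
      rw [hxe]
      exact H.add_mem hy (hKH hxk)
    have hlt : finrank (ZMod p) U < finrank (ZMod p) ↥(S ⊔ U) := by
      apply Submodule.finrank_lt_finrank_of_lt
      exact lt_of_le_of_ne le_sup_right fun he => hnotle (he ▸ le_sup_left)
    omega
  · have hlt2 : H ⊓ LinearMap.ker F < LinearMap.ker F :=
      lt_of_le_of_ne inf_le_right fun he => hKH (he ▸ inf_le_left)
    have ht : finrank (ZMod p) ↥(H ⊓ LinearMap.ker F) < finrank (ZMod p) (LinearMap.ker F) :=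
      Submodule.finrank_lt_finrank_of_lt hlt2
    have hle : finrank (ZMod p) U ≤ finrank (ZMod p) ↥(S ⊔ U) :=
      Submodule.finrank_mono le_sup_right
    omega
end

section
/- Let n ≥ 2, V = F_2^n, and W = F_2^{n−2}. Then there exists a quadratic map F : V → W (i.e., a function F such that (x, y) ↦ F(x + y) − F(x) − F(y) is bilinear) such that every proper subspace H < V satisfies dim W − dim F(H) < n − dim H, where F(H) denotes the linear span in W of {F(x) : x ∈ H}. -/
open Module Submodule

namespace QuadAux

abbrev Vm (m : ℕ) := Fin (m + 2) → ZMod 2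
abbrev Wm (m : ℕ) := Fin m → ZMod 2

variable (m : ℕ)

def em : Fin (m + 2) := ⟨m, by omega⟩
def ep : Fin (m + 2) := ⟨m + 1, by omega⟩

def prev (i : Fin m) : Fin (m + 2) :=
  if (i : ℕ) = 0 then ep m else ⟨(i : ℕ) - 1, by omega⟩

/-- The quadratic map `F(w,s,t) = w + s·(shift w) + s t · e₀`. -/
def Fq (x : Vm m) : Wm m := fun i => x (Fin.castAdd 2 i) + x (em m) * x (prev m i)

def Bq : Vm m →ₗ[ZMod 2] Vm m →ₗ[ZMod 2] Wm m :=
  LinearMap.mk₂ (ZMod 2)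
    (fun x y => fun i => x (em m) * y (prev m i) + y (em m) * x (prev m i))
    (fun x x' y => by funext i; simp only [Pi.add_apply]; ring)
    (fun c x y => by funext i; simp only [Pi.smul_apply, smul_eq_mul]; ring)
    (fun x y y' => by funext i; simp only [Pi.add_apply]; ring)
    (fun c x y => by funext i; simp only [Pi.smul_apply, smul_eq_mul]; ring)

lemma Fq_quadratic (x y : Vm m) : Fq m (x + y) - Fq m x - Fq m y = Bq m x y := by
  funext i
  simp only [Fq, Bq, LinearMap.mk₂_apply, Pi.add_apply, Pi.sub_apply]
  ring

def pim : Vm m →ₗ[ZMod 2] Wm m := LinearMap.funLeft (ZMod 2) (ZMod 2) (Fin.castAdd 2)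

def sh : Wm m →ₗ[ZMod 2] Wm m where
  toFun w := fun i => if h : 0 < (i : ℕ) then w ⟨(i : ℕ) - 1, by omega⟩ else 0
  map_add' x y := by funext i; by_cases h : 0 < (i : ℕ) <;> simp [h]
  map_smul' c x := by funext i; by_cases h : 0 < (i : ℕ) <;> simp [h]

def eb : Vm m := Pi.single (ep m) (1 : ZMod 2)

def Nmap (a : Vm m) : Vm m →ₗ[ZMod 2] Wm m :=
  pim m + (LinearMap.proj (em m) : Vm m →ₗ[ZMod 2] ZMod 2).smulRight (pim m a)

lemma zcases : ∀ u : ZMod 2, u = 0 ∨ u = 1 := by decide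
lemma z2 : ∀ u v : ZMod 2, u + v = 0 → u = v := by decide
lemma zz : ∀ u : ZMod 2, u + u = 0 := by decide

lemma pim_apply (x : Vm m) (i : Fin m) : pim m x i = x (Fin.castAdd 2 i) := rfl

lemma Nmap_apply (a x : Vm m) (i : Fin m) :
    Nmap m a x i = x (Fin.castAdd 2 i) + x (em m) * a (Fin.castAdd 2 i) := by
  simp [Nmap, pim_apply, LinearMap.smulRight_apply]

lemma cast_ne_em (i : Fin m) : Fin.castAdd 2 i ≠ em m := by
  simp only [ne_eq, Fin.ext_iff, Fin.coe_castAdd, em]; omega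

lemma cast_ne_ep (i : Fin m) : Fin.castAdd 2 i ≠ ep m := by
  simp only [ne_eq, Fin.ext_iff, Fin.coe_castAdd, ep]; omega

lemma em_ne_ep : em m ≠ ep m := by simp only [ne_eq, Fin.ext_iff, em, ep]; omega

lemma eb_cast (i : Fin m) : eb m (Fin.castAdd 2 i) = 0 := Pi.single_eq_of_ne (cast_ne_ep m i) 1
lemma eb_em : eb m (em m) = 0 := Pi.single_eq_of_ne (em_ne_ep m) 1
lemma eb_ep : eb m (ep m) = 1 := Pi.single_eq_same _ _

lemma prev_eq_zero (i : Fin m) (h : (i : ℕ) = 0) : prev m i = ep m := by simp [prev, h]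

lemma prev_eq_cast (i : Fin m) (h : (i : ℕ) ≠ 0) :
    prev m i = Fin.castAdd 2 (⟨(i : ℕ) - 1, by omega⟩ : Fin m) := by
  simp only [prev, h, if_neg]; rfl

noncomputable def uv (a : Vm m) : Vm m := a + a (ep m) • eb m

lemma uv_cast (a : Vm m) (i : Fin m) : uv m a (Fin.castAdd 2 i) = a (Fin.castAdd 2 i) := by
  simp [uv, eb_cast]
lemma uv_em (a : Vm m) (ha : a (em m) = 1) : uv m a (em m) = 1 := by simp [uv, eb_em, ha]
lemma uv_ep (a : Vm m) : uv m a (ep m) = 0 := by simp [uv, eb_ep, zz]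

lemma Fq_eq_pim (x : Vm m) (hx : x (em m) = 0) : Fq m x = pim m x := by
  funext i
  simp [Fq, pim_apply, hx]

lemma Fq_add_a (a : Vm m) (ha : a (em m) = 1) (x : Vm m) (hx : x (em m) = 1) :
    Fq m (x + a) = Nmap m a x := by
  funext i
  simp only [Fq, Pi.add_apply, Nmap_apply, hx, ha]
  have h2 : (1 : ZMod 2) + 1 = 0 := by decide
  rw [h2, zero_mul]
  ring

lemma Nmap_ker (a : Vm m) (ha : a (em m) = 1) (x : Vm m) (hx : Nmap m a x = 0) :
    x = x (em m) • uv m a + x (ep m) • eb m := by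
  have hc : ∀ i : Fin m, x (Fin.castAdd 2 i) = x (em m) * a (Fin.castAdd 2 i) := by
    intro i
    have := congrFun hx i
    rw [Nmap_apply] at this
    simpa using z2 _ _ (by simpa using this)
  funext j
  rcases j with ⟨jv, hj⟩
  simp only [Pi.add_apply, Pi.smul_apply, smul_eq_mul]
  rcases Nat.lt_trichotomy jv m with h | h | h
  · have hj' : (⟨jv, hj⟩ : Fin (m + 2)) = Fin.castAdd 2 (⟨jv, h⟩ : Fin m) := rfl
    rw [hj', hc, uv_cast, eb_cast, mul_zero, add_zero]
  · have hj' : (⟨jv, hj⟩ : Fin (m + 2)) = em m := by simp [em, Fin.ext_iff, h]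
    rw [hj', uv_em m a ha, eb_em, mul_one, mul_zero, add_zero]
  · have hj' : (⟨jv, hj⟩ : Fin (m + 2)) = ep m := by simp only [ep, Fin.ext_iff]; omega
    rw [hj', uv_ep, eb_ep, mul_zero, mul_one, zero_add]

lemma c_mem_diff (a : Vm m) (hm : 0 < m) (ha : a (em m) = 1) :
    Fq m (uv m a + eb m) - Fq m (uv m a) = Pi.single (⟨0, hm⟩ : Fin m) (1 : ZMod 2) := by
  funext i
  by_cases h : (i : ℕ) = 0
  · have hi : i = ⟨0, hm⟩ := by simp [Fin.ext_iff, h]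
    simp only [Fq, Pi.sub_apply, Pi.add_apply, eb_cast, uv_em m a ha, eb_em, add_zero,
      prev_eq_zero m i h, eb_ep, uv_ep, Pi.single_apply, if_pos hi]
    ring
  · have hi : ¬ i = ⟨0, hm⟩ := by simp only [Fin.ext_iff]; omega
    simp only [Fq, Pi.sub_apply, Pi.add_apply, eb_cast, uv_em m a ha, eb_em, add_zero,
      prev_eq_cast m i h, Pi.single_apply, if_neg hi]
    ring

lemma shift_diff (a : Vm m) (ha : a (em m) = 1) (x' : Vm m)
    (hm0 : x' (em m) = 0) (hp0 : x' (ep m) = 0) :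
    Fq m (x' + uv m a) - Fq m x' - Fq m (uv m a) = sh m (pim m x') := by
  funext i
  have hsh : sh m (pim m x') i =
      if h : 0 < (i : ℕ) then x' (Fin.castAdd 2 (⟨(i : ℕ) - 1, by omega⟩ : Fin m)) else 0 := rfl
  by_cases h : (i : ℕ) = 0
  · simp only [Fq, Pi.sub_apply, Pi.add_apply, uv_cast, uv_em m a ha, hm0,
      prev_eq_zero m i h, uv_ep, hp0, zero_add, add_zero]
    rw [hsh, dif_neg (by omega)]
    ring
  · simp only [Fq, Pi.sub_apply, Pi.add_apply, uv_cast, uv_em m a ha, hm0,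
      prev_eq_cast m i h, zero_add, add_zero]
    rw [hsh, dif_pos (by omega)]
    ring

lemma finrank_le_one' {M : Type*} [AddCommGroup M] [Module (ZMod 2) M]
    (Q : Submodule (ZMod 2) M) (φ : M →ₗ[ZMod 2] ZMod 2)
    (h : ∀ x ∈ Q, φ x = 0 → x = 0) : Module.finrank (ZMod 2) Q ≤ 1 := by
  have hinj : Function.Injective (φ.domRestrict Q) := by
    intro x y hxy
    have hsub : φ ((x : M) - y) = 0 := by
      rw [map_sub, sub_eq_zero]; exact hxy
    have h0 := h ((x : M) - (y : M)) (sub_mem x.2 y.2) hsub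
    exact Subtype.ext (sub_eq_zero.mp h0)
  simpa using LinearMap.finrank_le_finrank_of_injective hinj

lemma finrank_le_two' {M : Type*} [AddCommGroup M] [Module (ZMod 2) M]
    (Q : Submodule (ZMod 2) M) (φ ψ : M →ₗ[ZMod 2] ZMod 2)
    (h : ∀ x ∈ Q, φ x = 0 → ψ x = 0 → x = 0) : Module.finrank (ZMod 2) Q ≤ 2 := by
  have hinj : Function.Injective ((φ.prod ψ).domRestrict Q) := by
    intro x y hxy
    simp only [LinearMap.domRestrict_apply, LinearMap.prod_apply, Function.prod, Prod.mk.injEq] at hxy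
    have h1 : φ ((x : M) - y) = 0 := by rw [map_sub, sub_eq_zero]; exact hxy.1
    have h2 : ψ ((x : M) - y) = 0 := by rw [map_sub, sub_eq_zero]; exact hxy.2
    have h0 := h ((x : M) - (y : M)) (sub_mem x.2 y.2) h1 h2
    exact Subtype.ext (sub_eq_zero.mp h0)
  have := LinearMap.finrank_le_finrank_of_injective hinj
  simpa [Module.finrank_self] using this

lemma cyclic (hm : 0 < m) (U : Submodule (ZMod 2) (Wm m))
    (hc : Pi.single (⟨0, hm⟩ : Fin m) (1 : ZMod 2) ∈ U)
    (hsh : ∀ w ∈ U, sh m w ∈ U) : U = ⊤ := by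
  have hsingle : ∀ k : ℕ, ∀ hk : k < m, Pi.single (⟨k, hk⟩ : Fin m) (1 : ZMod 2) ∈ U := by
    intro k
    induction k with
    | zero => intro hk; exact hc
    | succ k ih =>
      intro hk
      have hk' : k < m := by omega
      have key : sh m (Pi.single (⟨k, hk'⟩ : Fin m) (1 : ZMod 2))
          = Pi.single (⟨k + 1, hk⟩ : Fin m) (1 : ZMod 2) := by
        funext i
        rcases i with ⟨iv, hiv⟩
        by_cases h : 0 < iv
        · simp only [sh, LinearMap.coe_mk, AddHom.coe_mk]
          rw [dif_pos h, Pi.single_apply, Pi.single_apply]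
          simp only [Fin.mk.injEq]
          by_cases he : iv = k + 1
          · simp [he]
          · rw [if_neg (by omega), if_neg (by omega)]
        · simp only [sh, LinearMap.coe_mk, AddHom.coe_mk]
          rw [dif_neg h, Pi.single_apply, if_neg (by simp only [Fin.mk.injEq]; omega)]
      rw [← key]
      exact hsh _ (ih hk')
  rw [eq_top_iff']
  intro w
  have hw : w = ∑ i : Fin m, w i • Pi.single i (1 : ZMod 2) := by
    funext j
    rw [Finset.sum_apply]
    simp [Pi.single_apply]
  rw [hw]
  refine Submodule.sum_mem _ fun i _ => Submodule.smul_mem _ _ ?_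
  rcases i with ⟨k, hk⟩
  exact hsingle k hk

lemma key (H : Submodule (ZMod 2) (Vm m)) (hH : H ≠ ⊤) :
    finrank (ZMod 2) H ≤
      finrank (ZMod 2) (span (ZMod 2) (Fq m '' (H : Set (Vm m)))) + 1 := by
  rcases Nat.eq_zero_or_pos m with hm0 | hm
  · subst hm0
    have hlt : finrank (ZMod 2) H < finrank (ZMod 2) (Vm 0) :=
      Submodule.finrank_lt hH
    have hV : finrank (ZMod 2) (Vm 0) = 2 := by
      simp [Module.finrank_fintype_fun_eq_card]
    omega
  set S := span (ZMod 2) (Fq m '' (H : Set (Vm m))) with hSdef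
  have hFS : ∀ x ∈ H, Fq m x ∈ S := fun x hx => subset_span ⟨x, hx, rfl⟩
  by_cases hA : ∀ x ∈ H, x (em m) = 0
  · -- Case A : the subspace avoids the s-coordinate
    have hrn := LinearMap.finrank_range_add_finrank_ker ((pim m).domRestrict H)
    rw [LinearMap.range_domRestrict] at hrn
    have hle : H.map (pim m) ≤ S := by
      rintro y ⟨x, hx, rfl⟩
      rw [← Fq_eq_pim m x (hA x hx)]
      exact hFS x hx
    have hmapS : finrank (ZMod 2) (H.map (pim m)) ≤ finrank (ZMod 2) S :=
      Submodule.finrank_mono hle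
    have hker : finrank (ZMod 2) (LinearMap.ker ((pim m).domRestrict H)) ≤ 1 := by
      apply finrank_le_one' _ ((LinearMap.proj (ep m)).comp H.subtype)
      intro z hz hzp
      have hz0 : pim m (z : Vm m) = 0 := by
        simpa [LinearMap.mem_ker] using hz
      have hzp' : (z : Vm m) (ep m) = 0 := hzp
      have hzero : (z : Vm m) = 0 := by
        funext j
        rcases j with ⟨jv, hj⟩
        simp only [Pi.zero_apply]
        rcases Nat.lt_trichotomy jv m with h | h | h
        · have hj' : (⟨jv, hj⟩ : Fin (m + 2)) = Fin.castAdd 2 (⟨jv, h⟩ : Fin m) := rfl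
          rw [hj']
          simpa [pim_apply] using congrFun hz0 ⟨jv, h⟩
        · have hj' : (⟨jv, hj⟩ : Fin (m + 2)) = em m := by simp [em, Fin.ext_iff, h]
          rw [hj']
          exact hA _ z.2
        · have hj' : (⟨jv, hj⟩ : Fin (m + 2)) = ep m := by simp only [ep, Fin.ext_iff]; omega
          rw [hj']
          exact hzp'
      exact Subtype.ext hzero
    omega
  · push_neg at hA
    obtain ⟨a, haH, ha0⟩ := hA
    have ha : a (em m) = 1 := (zcases _).resolve_left ha0
    have hNS : ∀ x ∈ H, Nmap m a x ∈ S := by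
      intro x hx
      rcases zcases (x (em m)) with h0 | h1
      · have hEq : Nmap m a x = Fq m x := by
          rw [Fq_eq_pim m x h0]
          funext i
          rw [Nmap_apply, pim_apply, h0, zero_mul, add_zero]
        rw [hEq]
        exact hFS x hx
      · rw [← Fq_add_a m a ha x h1]
        exact hFS _ (H.add_mem hx haH)
    have hrn := LinearMap.finrank_range_add_finrank_ker ((Nmap m a).domRestrict H)
    rw [LinearMap.range_domRestrict] at hrn
    have hmaple : H.map (Nmap m a) ≤ S := by
      rintro y ⟨x, hx, rfl⟩
      exact hNS x hx
    by_cases hb : eb m ∈ H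
    · -- hard case : e_{m+1} ∈ H (and hence uv ∈ H)
      have huH : uv m a ∈ H := H.add_mem haH (H.smul_mem _ hb)
      have hcS : Pi.single (⟨0, hm⟩ : Fin m) (1 : ZMod 2) ∈ S := by
        rw [← c_mem_diff m a hm ha]
        exact S.sub_mem (hFS _ (H.add_mem huH hb)) (hFS _ huH)
      have hshS : ∀ x ∈ H, sh m (Nmap m a x) ∈ S := by
        intro x hx
        set x' : Vm m := x + x (em m) • uv m a + x (ep m) • eb m with hx'def
        have hx'H : x' ∈ H :=
          H.add_mem (H.add_mem hx (H.smul_mem _ huH)) (H.smul_mem _ hb)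
        have hx'em : x' (em m) = 0 := by
          simp only [hx'def, Pi.add_apply, Pi.smul_apply, smul_eq_mul, uv_em m a ha, eb_em,
            mul_one, mul_zero, add_zero]
          exact zz _
        have hx'ep : x' (ep m) = 0 := by
          simp only [hx'def, Pi.add_apply, Pi.smul_apply, smul_eq_mul, uv_ep, eb_ep,
            mul_one, mul_zero, add_zero, zero_add]
          exact zz _
        have hpim : pim m x' = Nmap m a x := by
          funext i
          simp only [pim_apply, hx'def, Pi.add_apply, Pi.smul_apply, smul_eq_mul, uv_cast,
            eb_cast, mul_zero, add_zero, Nmap_apply]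
        have hdiff := shift_diff m a ha x' hx'em hx'ep
        rw [hpim] at hdiff
        rw [← hdiff]
        exact S.sub_mem (S.sub_mem (hFS _ (H.add_mem hx'H huH)) (hFS _ hx'H)) (hFS _ huH)
      by_cases hdim : finrank (ZMod 2) (H.map (Nmap m a)) + 1 ≤ finrank (ZMod 2) S
      · have hker2 : finrank (ZMod 2) (LinearMap.ker ((Nmap m a).domRestrict H)) ≤ 2 := by
          apply finrank_le_two' _ ((LinearMap.proj (em m)).comp H.subtype)
            ((LinearMap.proj (ep m)).comp H.subtype)
          intro z hz h1 h2
          have hz0 : Nmap m a (z : Vm m) = 0 := by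
            simpa [LinearMap.mem_ker] using hz
          have hzd := Nmap_ker m a ha _ hz0
          have h1' : (z : Vm m) (em m) = 0 := h1
          have h2' : (z : Vm m) (ep m) = 0 := h2
          rw [h1', h2', zero_smul, zero_smul, add_zero] at hzd
          exact Subtype.ext hzd
        omega
      · exfalso
        push_neg at hdim
        have hSeq : H.map (Nmap m a) = S :=
          Submodule.eq_of_le_of_finrank_le hmaple (by omega)
        have hStop : S = ⊤ := by
          apply cyclic m hm S hcS
          intro w hw
          rw [← hSeq] at hw
          obtain ⟨x, hx, rfl⟩ := hw
          exact hshS x hx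
        apply hH
        rw [eq_top_iff']
        intro v
        have hv : Nmap m a v ∈ H.map (Nmap m a) := by
          rw [hSeq, hStop]
          trivial
        obtain ⟨h, hhH, hh⟩ := hv
        have hker0 : Nmap m a (v - h) = 0 := by rw [map_sub, hh, sub_self]
        have hvd := Nmap_ker m a ha _ hker0
        have hvh : v - h ∈ H := by
          rw [hvd]
          exact H.add_mem (H.smul_mem _ huH) (H.smul_mem _ hb)
        simpa using H.add_mem hvh hhH
    · -- easy case : e_{m+1} ∉ H
      have hmapS : finrank (ZMod 2) (H.map (Nmap m a)) ≤ finrank (ZMod 2) S :=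
        Submodule.finrank_mono hmaple
      have hker1 : finrank (ZMod 2) (LinearMap.ker ((Nmap m a).domRestrict H)) ≤ 1 := by
        apply finrank_le_one' _ ((LinearMap.proj (em m)).comp H.subtype)
        intro z hz hzem
        have hz0 : Nmap m a (z : Vm m) = 0 := by
          simpa [LinearMap.mem_ker] using hz
        have hzd := Nmap_ker m a ha _ hz0
        have hzem' : (z : Vm m) (em m) = 0 := hzem
        rw [hzem', zero_smul, zero_add] at hzd
        rcases zcases ((z : Vm m) (ep m)) with h0 | h1
        · rw [h0, zero_smul] at hzd
          exact Subtype.ext hzd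
        · exfalso
          apply hb
          rw [h1, one_smul] at hzd
          rw [← hzd]
          exact z.2
      omega

end QuadAux

/-- Let `n ≥ 2`, `V = F_2^n`, and `W = F_2^{n-2}`. Then there exists a quadratic map
`F : V → W` (i.e. a function such that `(x, y) ↦ F (x + y) - F x - F y` is bilinear)
such that every proper subspace `H < V` satisfies `dim W - dim F(H) < n - dim H`,
where `F(H)` is the linear span in `W` of `{F x : x ∈ H}`. -/
theorem exists_quadratic_map_dMaximal_condition (n : ℕ) (hn : 2 ≤ n) :
    ∃ F : (Fin n → ZMod 2) → (Fin (n - 2) → ZMod 2),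
      (∃ B : (Fin n → ZMod 2) →ₗ[ZMod 2] (Fin n → ZMod 2) →ₗ[ZMod 2]
          (Fin (n - 2) → ZMod 2),
        ∀ x y, F (x + y) - F x - F y = B x y) ∧
      ∀ H : Submodule (ZMod 2) (Fin n → ZMod 2), H ≠ ⊤ →
        Module.finrank (ZMod 2) (Fin (n - 2) → ZMod 2)
            - Module.finrank (ZMod 2)
                ↥(Submodule.span (ZMod 2) (F '' ↑H)) <
          Module.finrank (ZMod 2) (Fin n → ZMod 2)
            - Module.finrank (ZMod 2) ↥H := by
  obtain ⟨m, rfl⟩ : ∃ m, n = m + 2 := ⟨n - 2, by omega⟩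
  refine ⟨QuadAux.Fq m, ⟨QuadAux.Bq m, QuadAux.Fq_quadratic m⟩, ?_⟩
  intro H hH
  show Module.finrank (ZMod 2) (QuadAux.Wm m)
      - Module.finrank (ZMod 2)
          ↥(Submodule.span (ZMod 2) (QuadAux.Fq m '' (H : Set (QuadAux.Vm m)))) <
    Module.finrank (ZMod 2) (QuadAux.Vm m) - Module.finrank (ZMod 2) ↥H
  have h2 : Module.finrank (ZMod 2) (QuadAux.Vm m) = m + 2 := by
    simp [Module.finrank_fintype_fun_eq_card]
  have h3 : Module.finrank (ZMod 2) ↥H ≤ Module.finrank (ZMod 2)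
      ↥(Submodule.span (ZMod 2) (QuadAux.Fq m '' (H : Set (QuadAux.Vm m)))) + 1 :=
    QuadAux.key m H hH
  have h6 : Module.finrank (ZMod 2) (QuadAux.Wm m) = m := by
    simp [Module.finrank_fintype_fun_eq_card]
  have h5 : Module.finrank (ZMod 2)
      ↥(Submodule.span (ZMod 2) (QuadAux.Fq m '' (H : Set (QuadAux.Vm m)))) ≤
      Module.finrank (ZMod 2) (QuadAux.Wm m) :=
    Submodule.finrank_le _
  omega
end
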